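/- arXiv:cond-mat/0204475 — 7 statements merged into one kernel-verified Lean document; each statement's English description precedes it below -/
import Mathlib

section
/- Let α ∈ (0,1], and let ρ(x,y,z) = ρ₀ − α²x² − y² − β²z² with ρ₀, β > 0. Given a Lipschitz curve γ(t) = (x(t), y(t), z(t)) in the region {ρ > 0}, define the planar curve γ̃(t) = (0, ỹ(t), z(t)) with ỹ(t) = √(α²x(t)² + y(t)²). Then for a.e. t, ρ(γ̃(t))·|γ̃'(t)| − Ω·ρ(γ̃(t))²·z'(t) ≤ ρ(γ(t))·|γ'(t)| − Ω·ρ(γ(t))²·z'(t); consequently E[γ̃] ≤ E[γ], where E[γ] = ∫ ρ(γ)|γ'| dt − Ω ∫ ρ(γ)² z' dt. -/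
open MeasureTheory Set

lemma aux_deriv_sq_le (α : ℝ) (hα : 0 < α) (hα1 : α ≤ 1) (x y : ℝ → ℝ) (t : ℝ)
    (hx : DifferentiableAt ℝ x t) (hy : DifferentiableAt ℝ y t) :
    (deriv (fun s => Real.sqrt (α^2*(x s)^2 + (y s)^2)) t)^2
      ≤ (deriv x t)^2 + (deriv y t)^2 := by
  set g : ℝ → ℝ := fun s => Real.sqrt (α^2*(x s)^2 + (y s)^2) with hg
  by_cases h1 : α^2*(x t)^2 + (y t)^2 = 0
  · by_cases hd : DifferentiableAt ℝ g t
    · have hmin : IsLocalMin g t := by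
        apply Filter.Eventually.of_forall
        intro s
        have : g t = 0 := by simp [hg, h1]
        rw [this]
        exact Real.sqrt_nonneg _
      rw [hmin.deriv_eq_zero]
      nlinarith [sq_nonneg (deriv x t), sq_nonneg (deriv y t)]
    · rw [deriv_zero_of_not_differentiableAt hd]
      nlinarith [sq_nonneg (deriv x t), sq_nonneg (deriv y t)]
  · have h1' : 0 < α^2*(x t)^2 + (y t)^2 := lt_of_le_of_ne (by positivity) (Ne.symm h1)
    have hh : HasDerivAt (fun s => α^2*(x s)^2 + (y s)^2)
        (α^2 * (2 * x t * deriv x t) + 2 * y t * deriv y t) t := by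
      have h2 : HasDerivAt (fun s => (x s)^2) (2 * x t * deriv x t) t := by
        simpa using hx.hasDerivAt.fun_pow 2
      have h3 : HasDerivAt (fun s => (y s)^2) (2 * y t * deriv y t) t := by
        simpa using hy.hasDerivAt.fun_pow 2
      exact (h2.const_mul (α^2)).add h3
    have hs : HasDerivAt g ((1 / (2 * Real.sqrt (α^2*(x t)^2 + (y t)^2))) *
        (α^2 * (2 * x t * deriv x t) + 2 * y t * deriv y t)) t :=
      (Real.hasDerivAt_sqrt (ne_of_gt h1')).comp t hh
    rw [hs.deriv]
    set s := Real.sqrt (α^2*(x t)^2 + (y t)^2) with hsdef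
    have hspos : 0 < s := Real.sqrt_pos.mpr h1'
    have hsq : s^2 = α^2*(x t)^2 + (y t)^2 := Real.sq_sqrt h1'.le
    have heq : (1 / (2*s)) * (α^2 * (2 * x t * deriv x t) + 2 * y t * deriv y t)
        = (α^2 * x t * deriv x t + y t * deriv y t) / s := by
      field_simp
    rw [heq, div_pow, div_le_iff₀ (by positivity), hsq]
    have key1 : (α^2 * x t * deriv x t + y t * deriv y t)^2
        ≤ (α^2*(x t)^2 + (y t)^2) * (α^2*(deriv x t)^2 + (deriv y t)^2) := by
      nlinarith [sq_nonneg (α * x t * deriv y t - y t * (α * deriv x t))]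
    have key2 : (α^2*(x t)^2 + (y t)^2) * (α^2*(deriv x t)^2 + (deriv y t)^2)
        ≤ (α^2*(x t)^2 + (y t)^2) * ((deriv x t)^2 + (deriv y t)^2) := by
      apply mul_le_mul_of_nonneg_left _ h1'.le
      have hα2 : α^2 ≤ 1 := by nlinarith
      nlinarith [mul_nonneg (sub_nonneg.mpr hα2) (sq_nonneg (deriv x t))]
    nlinarith [key1, key2]

/-- projecting a vortex line onto the (y,z)-plane via
ỹ = √(α²x² + y²) decreases the energy density a.e. and hence the energy. -/
theorem stmt_0 (α β ρ₀ Ω : ℝ) (hα : 0 < α) (hα1 : α ≤ 1) (hβ : 0 < β)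
    (hρ₀ : 0 < ρ₀) (hΩ : 0 ≤ Ω)
    (x y z : ℝ → ℝ) (Kx Ky Kz : NNReal)
    (hx : LipschitzWith Kx x) (hy : LipschitzWith Ky y) (hz : LipschitzWith Kz z)
    (hpos : ∀ t ∈ Icc (0:ℝ) 1,
      0 < ρ₀ - α^2 * (x t)^2 - (y t)^2 - β^2 * (z t)^2) :
    (∀ᵐ t ∂(volume.restrict (Icc (0:ℝ) 1)),
      (ρ₀ - (Real.sqrt (α^2*(x t)^2 + (y t)^2))^2 - β^2 * (z t)^2) *
          Real.sqrt ((deriv (fun s => Real.sqrt (α^2*(x s)^2 + (y s)^2)) t)^2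
            + (deriv z t)^2)
        - Ω * (ρ₀ - (Real.sqrt (α^2*(x t)^2 + (y t)^2))^2 - β^2 * (z t)^2)^2 * deriv z t
      ≤ (ρ₀ - α^2 * (x t)^2 - (y t)^2 - β^2 * (z t)^2) *
          Real.sqrt ((deriv x t)^2 + (deriv y t)^2 + (deriv z t)^2)
        - Ω * (ρ₀ - α^2 * (x t)^2 - (y t)^2 - β^2 * (z t)^2)^2 * deriv z t)
    ∧
    (∫ t in (0:ℝ)..1,
        ((ρ₀ - (Real.sqrt (α^2*(x t)^2 + (y t)^2))^2 - β^2 * (z t)^2) *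
          Real.sqrt ((deriv (fun s => Real.sqrt (α^2*(x s)^2 + (y s)^2)) t)^2
            + (deriv z t)^2)
        - Ω * (ρ₀ - (Real.sqrt (α^2*(x t)^2 + (y t)^2))^2 - β^2 * (z t)^2)^2 * deriv z t))
      ≤ ∫ t in (0:ℝ)..1,
        ((ρ₀ - α^2 * (x t)^2 - (y t)^2 - β^2 * (z t)^2) *
          Real.sqrt ((deriv x t)^2 + (deriv y t)^2 + (deriv z t)^2)
        - Ω * (ρ₀ - α^2 * (x t)^2 - (y t)^2 - β^2 * (z t)^2)^2 * deriv z t) := by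
  have hxd : ∀ᵐ t ∂(volume.restrict (Icc (0:ℝ) 1)), DifferentiableAt ℝ x t :=
    ae_restrict_of_ae hx.ae_differentiableAt
  have hyd : ∀ᵐ t ∂(volume.restrict (Icc (0:ℝ) 1)), DifferentiableAt ℝ y t :=
    ae_restrict_of_ae hy.ae_differentiableAt
  have hmem : ∀ᵐ t ∂(volume.restrict (Icc (0:ℝ) 1)), t ∈ Icc (0:ℝ) 1 :=
    ae_restrict_mem measurableSet_Icc
  -- the pointwise inequality, a.e. on [0,1]
  have hae : ∀ᵐ t ∂(volume.restrict (Icc (0:ℝ) 1)),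
      (ρ₀ - (Real.sqrt (α^2*(x t)^2 + (y t)^2))^2 - β^2 * (z t)^2) *
          Real.sqrt ((deriv (fun s => Real.sqrt (α^2*(x s)^2 + (y s)^2)) t)^2
            + (deriv z t)^2)
        - Ω * (ρ₀ - (Real.sqrt (α^2*(x t)^2 + (y t)^2))^2 - β^2 * (z t)^2)^2 * deriv z t
      ≤ (ρ₀ - α^2 * (x t)^2 - (y t)^2 - β^2 * (z t)^2) *
          Real.sqrt ((deriv x t)^2 + (deriv y t)^2 + (deriv z t)^2)
        - Ω * (ρ₀ - α^2 * (x t)^2 - (y t)^2 - β^2 * (z t)^2)^2 * deriv z t := by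
    filter_upwards [hxd, hyd, hmem] with t hdx hdy ht
    have hρ := hpos t ht
    have hsq : (Real.sqrt (α^2*(x t)^2 + (y t)^2))^2 = α^2*(x t)^2 + (y t)^2 :=
      Real.sq_sqrt (by positivity)
    rw [hsq]
    have hkey := aux_deriv_sq_le α hα hα1 x y t hdx hdy
    have hsqrt : Real.sqrt ((deriv (fun s => Real.sqrt (α^2*(x s)^2 + (y s)^2)) t)^2
          + (deriv z t)^2)
        ≤ Real.sqrt ((deriv x t)^2 + (deriv y t)^2 + (deriv z t)^2) :=
      Real.sqrt_le_sqrt (by linarith)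
    have hmul := mul_le_mul_of_nonneg_left hsqrt
      (le_of_lt (by linarith : (0:ℝ) < ρ₀ - (α^2*(x t)^2 + (y t)^2) - β^2*(z t)^2))
    have e1 : ρ₀ - (α^2*(x t)^2 + (y t)^2) - β^2*(z t)^2
        = ρ₀ - α^2*(x t)^2 - (y t)^2 - β^2*(z t)^2 := by ring
    rw [e1] at hmul ⊢
    linarith
  refine ⟨hae, ?_⟩
  -- integrability of both integrands
  set g : ℝ → ℝ := fun s => Real.sqrt (α^2*(x s)^2 + (y s)^2) with hgdef
  have hρcont : Continuous (fun t => ρ₀ - α^2 * (x t)^2 - (y t)^2 - β^2 * (z t)^2) := by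
    have := hx.continuous; have := hy.continuous; have := hz.continuous
    fun_prop
  have hgcont : Continuous g := by
    have := hx.continuous; have := hy.continuous
    fun_prop
  have mdx : Measurable (deriv x) := measurable_deriv x
  have mdy : Measurable (deriv y) := measurable_deriv y
  have mdz : Measurable (deriv z) := measurable_deriv z
  have mdg : Measurable (deriv g) := measurable_deriv g
  have mF : Measurable (fun t =>
      (ρ₀ - (Real.sqrt (α^2*(x t)^2 + (y t)^2))^2 - β^2 * (z t)^2) *
          Real.sqrt ((deriv (fun s => Real.sqrt (α^2*(x s)^2 + (y s)^2)) t)^2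
            + (deriv z t)^2)
        - Ω * (ρ₀ - (Real.sqrt (α^2*(x t)^2 + (y t)^2))^2 - β^2 * (z t)^2)^2 * deriv z t) := by
    have hrtcont : Continuous (fun t =>
        ρ₀ - (Real.sqrt (α^2*(x t)^2 + (y t)^2))^2 - β^2 * (z t)^2) := by
      have := hx.continuous; have := hy.continuous; have := hz.continuous
      fun_prop
    exact (hrtcont.measurable.mul
        (Real.continuous_sqrt.measurable.comp ((mdg.pow_const 2).add (mdz.pow_const 2)))).sub
      (((measurable_const.mul (hrtcont.measurable.pow_const 2))).mul mdz)
  have mG : Measurable (fun t =>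
      (ρ₀ - α^2 * (x t)^2 - (y t)^2 - β^2 * (z t)^2) *
          Real.sqrt ((deriv x t)^2 + (deriv y t)^2 + (deriv z t)^2)
        - Ω * (ρ₀ - α^2 * (x t)^2 - (y t)^2 - β^2 * (z t)^2)^2 * deriv z t) := by
    exact (hρcont.measurable.mul
        (Real.continuous_sqrt.measurable.comp
          (((mdx.pow_const 2).add (mdy.pow_const 2)).add (mdz.pow_const 2)))).sub
      (((measurable_const.mul (hρcont.measurable.pow_const 2))).mul mdz)
  -- uniform bound
  set C : ℝ := ρ₀ * Real.sqrt ((Kx:ℝ)^2 + (Ky:ℝ)^2 + (Kz:ℝ)^2) + Ω * ρ₀^2 * Kz with hCdef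
  have hdxb : ∀ t, |deriv x t| ≤ (Kx:ℝ) := fun t => by
    simpa [Real.norm_eq_abs] using norm_deriv_le_of_lipschitz (𝕜 := ℝ) (x₀ := t) hx
  have hdyb : ∀ t, |deriv y t| ≤ (Ky:ℝ) := fun t => by
    simpa [Real.norm_eq_abs] using norm_deriv_le_of_lipschitz (𝕜 := ℝ) (x₀ := t) hy
  have hdzb : ∀ t, |deriv z t| ≤ (Kz:ℝ) := fun t => by
    simpa [Real.norm_eq_abs] using norm_deriv_le_of_lipschitz (𝕜 := ℝ) (x₀ := t) hz
  have hsqx : ∀ t, (deriv x t)^2 ≤ (Kx:ℝ)^2 := fun t => by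
    nlinarith [hdxb t, abs_nonneg (deriv x t), sq_abs (deriv x t), neg_abs_le (deriv x t), le_abs_self (deriv x t)]
  have hsqy : ∀ t, (deriv y t)^2 ≤ (Ky:ℝ)^2 := fun t => by
    nlinarith [hdyb t, abs_nonneg (deriv y t), sq_abs (deriv y t), neg_abs_le (deriv y t), le_abs_self (deriv y t)]
  have hsqz : ∀ t, (deriv z t)^2 ≤ (Kz:ℝ)^2 := fun t => by
    nlinarith [hdzb t, abs_nonneg (deriv z t), sq_abs (deriv z t), neg_abs_le (deriv z t), le_abs_self (deriv z t)]
  -- helper bound for any ρ-value in (0, ρ₀] and any speed bounds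
  have hbound : ∀ (ρ w : ℝ), 0 < ρ → ρ ≤ ρ₀ → 0 ≤ w →
      w ≤ Real.sqrt ((Kx:ℝ)^2 + (Ky:ℝ)^2 + (Kz:ℝ)^2) → ∀ t,
      |ρ * w - Ω * ρ^2 * deriv z t| ≤ C := by
    intro ρ w hρ hρle hw hwle t
    have h1 : |ρ * w| ≤ ρ₀ * Real.sqrt ((Kx:ℝ)^2 + (Ky:ℝ)^2 + (Kz:ℝ)^2) := by
      rw [abs_of_nonneg (by positivity)]
      exact mul_le_mul hρle hwle hw hρ₀.le
    have h2 : |Ω * ρ^2 * deriv z t| ≤ Ω * ρ₀^2 * (Kz:ℝ) := by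
      rw [abs_mul, abs_mul, abs_of_nonneg hΩ, abs_of_nonneg (sq_nonneg ρ)]
      have hρρ : ρ^2 ≤ ρ₀^2 := by nlinarith
      exact mul_le_mul (mul_le_mul_of_nonneg_left hρρ hΩ) (hdzb t) (abs_nonneg _)
        (by positivity)
    have h3 : |ρ * w - Ω * ρ^2 * deriv z t| ≤ |ρ * w| + |Ω * ρ^2 * deriv z t| :=
      abs_sub _ _
    rw [hCdef]
    linarith
  have hρbound : ∀ t ∈ Icc (0:ℝ) 1,
      ρ₀ - α^2 * (x t)^2 - (y t)^2 - β^2 * (z t)^2 ≤ ρ₀ := by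
    intro t ht
    nlinarith [sq_nonneg (x t), sq_nonneg (y t), sq_nonneg (z t), sq_nonneg α, sq_nonneg β,
      mul_nonneg (sq_nonneg α) (sq_nonneg (x t)), mul_nonneg (sq_nonneg β) (sq_nonneg (z t))]
  have hFbound : ∀ᵐ t ∂(volume.restrict (Icc (0:ℝ) 1)),
      ‖(ρ₀ - (Real.sqrt (α^2*(x t)^2 + (y t)^2))^2 - β^2 * (z t)^2) *
          Real.sqrt ((deriv (fun s => Real.sqrt (α^2*(x s)^2 + (y s)^2)) t)^2
            + (deriv z t)^2)
        - Ω * (ρ₀ - (Real.sqrt (α^2*(x t)^2 + (y t)^2))^2 - β^2 * (z t)^2)^2 * deriv z t‖ ≤ C := by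
    filter_upwards [hxd, hyd, hmem] with t hdx hdy ht
    have hρ := hpos t ht
    have hsq : (Real.sqrt (α^2*(x t)^2 + (y t)^2))^2 = α^2*(x t)^2 + (y t)^2 :=
      Real.sq_sqrt (by positivity)
    rw [Real.norm_eq_abs, hsq]
    have e1 : ρ₀ - (α^2*(x t)^2 + (y t)^2) - β^2*(z t)^2
        = ρ₀ - α^2*(x t)^2 - (y t)^2 - β^2*(z t)^2 := by ring
    rw [e1]
    have hkey := aux_deriv_sq_le α hα hα1 x y t hdx hdy
    apply hbound _ _ hρ (hρbound t ht) (Real.sqrt_nonneg _)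
      (Real.sqrt_le_sqrt (by linarith [hsqx t, hsqy t, hsqz t])) t
  have hGbound : ∀ᵐ t ∂(volume.restrict (Icc (0:ℝ) 1)),
      ‖(ρ₀ - α^2 * (x t)^2 - (y t)^2 - β^2 * (z t)^2) *
          Real.sqrt ((deriv x t)^2 + (deriv y t)^2 + (deriv z t)^2)
        - Ω * (ρ₀ - α^2 * (x t)^2 - (y t)^2 - β^2 * (z t)^2)^2 * deriv z t‖ ≤ C := by
    filter_upwards [hmem] with t ht
    have hρ := hpos t ht
    rw [Real.norm_eq_abs]
    exact hbound _ _ hρ (hρbound t ht) (Real.sqrt_nonneg _)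
      (Real.sqrt_le_sqrt (by linarith [hsqx t, hsqy t, hsqz t])) t
  have hFint : IntervalIntegrable (fun t =>
      (ρ₀ - (Real.sqrt (α^2*(x t)^2 + (y t)^2))^2 - β^2 * (z t)^2) *
          Real.sqrt ((deriv (fun s => Real.sqrt (α^2*(x s)^2 + (y s)^2)) t)^2
            + (deriv z t)^2)
        - Ω * (ρ₀ - (Real.sqrt (α^2*(x t)^2 + (y t)^2))^2 - β^2 * (z t)^2)^2 * deriv z t)
      volume 0 1 := by
    rw [intervalIntegrable_iff_integrableOn_Icc_of_le (by norm_num)]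
    exact Integrable.mono' (integrable_const C) mF.aestronglyMeasurable hFbound
  have hGint : IntervalIntegrable (fun t =>
      (ρ₀ - α^2 * (x t)^2 - (y t)^2 - β^2 * (z t)^2) *
          Real.sqrt ((deriv x t)^2 + (deriv y t)^2 + (deriv z t)^2)
        - Ω * (ρ₀ - α^2 * (x t)^2 - (y t)^2 - β^2 * (z t)^2)^2 * deriv z t)
      volume 0 1 := by
    rw [intervalIntegrable_iff_integrableOn_Icc_of_le (by norm_num)]
    exact Integrable.mono' (integrable_const C) mG.aestronglyMeasurable hGbound
  exact intervalIntegral.integral_mono_ae_restrict (by norm_num) hFint hGint hae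
end

section
/- Let ρ(z) = ρ₀ − β²z² and z_max = √ρ₀/β, with 0 < β < 1/√3. If Ω ρ₀ < 1/6 + 1/(6β²), then there exists a Lipschitz function v on [−z_max, z_max] such that Q(v) = ∫_{−z_max}^{z_max} [2(2Ωρ − 1)v² + ρ v'²] dz < 0. In fact one may take v(z) = 0 for z ≤ θ z_max and v(z) = (z/z_max − θ)/(1−θ) for z ≥ θ z_max, with θ = 1 − 3β². -/
open MeasureTheory Set

lemma ramp_lipschitz (a c : ℝ) (hc : 0 ≤ c) :
    LipschitzWith (Real.toNNReal c) (fun z : ℝ => c * max (z - a) 0) := by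
  apply LipschitzWith.of_dist_le_mul
  intro x y
  simp only [Real.dist_eq]
  rw [Real.coe_toNNReal c hc]
  have h1 : |max (x - a) 0 - max (y - a) 0| ≤ |(x - a) - (y - a)| :=
    abs_max_sub_max_le_abs _ _ _
  calc |c * max (x - a) 0 - c * max (y - a) 0|
      = c * |max (x - a) 0 - max (y - a) 0| := by
        rw [← mul_sub, abs_mul, abs_of_nonneg hc]
    _ ≤ c * |x - y| := by
        refine mul_le_mul_of_nonneg_left ?_ hc
        calc |max (x - a) 0 - max (y - a) 0| ≤ |(x - a) - (y - a)| := h1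
          _ = |x - y| := by ring_nf

set_option maxHeartbeats 1000000 in
/-- instability of the straight vortex for β < 1/√3 and
Ωρ₀ < 1/6 + 1/(6β²); the explicit piecewise-linear perturbation with
θ = 1 - 3β² has negative second variation. -/
theorem stmt_3 (ρ₀ β Ω : ℝ) (hρ₀ : 0 < ρ₀) (hβ : 0 < β)
    (hβ3 : β < 1 / Real.sqrt 3) (hΩpos : 0 < Ω)
    (hΩ : Ω * ρ₀ < 1/6 + 1/(6*β^2)) :
    ∃ (v : ℝ → ℝ) (K : NNReal), LipschitzWith K v ∧
      v = (fun z => if z ≤ (1 - 3*β^2) * (Real.sqrt ρ₀ / β) then (0:ℝ)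
            else (z / (Real.sqrt ρ₀ / β) - (1 - 3*β^2)) / (1 - (1 - 3*β^2))) ∧
      (∫ z in (-(Real.sqrt ρ₀ / β))..(Real.sqrt ρ₀ / β),
        (2*(2*Ω*(ρ₀ - β^2*z^2) - 1)*(v z)^2 + (ρ₀ - β^2*z^2)*(deriv v z)^2)) < 0 := by
  -- basic numeric facts
  have hs3 : (0:ℝ) < Real.sqrt 3 := Real.sqrt_pos.mpr (by norm_num)
  have hβ3' : β * Real.sqrt 3 < 1 := by
    rw [lt_div_iff₀ hs3] at hβ3; exact hβ3
  have h3 : β^2 < 1/3 := by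
    nlinarith [Real.sq_sqrt (show (0:ℝ) ≤ 3 by norm_num), mul_pos hβ hs3]
  set r := Real.sqrt ρ₀ with hrdef
  have hrpos : 0 < r := Real.sqrt_pos.mpr hρ₀
  have hr2 : r^2 = ρ₀ := Real.sq_sqrt hρ₀.le
  set b := r / β with hbdef
  have hbpos : 0 < b := div_pos hrpos hβ
  set θ := 1 - 3*β^2 with hθdef
  have hθ0 : 0 < θ := by rw [hθdef]; nlinarith
  have hθ1 : θ < 1 := by rw [hθdef]; nlinarith
  set a := θ * b with hadef
  have hapos : 0 < a := mul_pos hθ0 hbpos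
  have hab : a < b := by
    calc a = θ * b := hadef
      _ < 1 * b := mul_lt_mul_of_pos_right hθ1 hbpos
      _ = b := one_mul b
  have hnba : -b < a := by linarith
  set c := 1 / (3*β^2*b) with hcdef
  have hL : (0:ℝ) < 3*β^2*b := by positivity
  have hcpos : 0 < c := by rw [hcdef]; positivity
  set V : ℝ → ℝ := fun z => if z ≤ a then (0:ℝ) else (z / b - θ) / (1 - θ) with hVdef
  refine ⟨V, Real.toNNReal c, ?_, rfl, ?_⟩
  · -- Lipschitz
    have hveq : V = fun z => c * max (z - a) 0 := by
      funext z
      by_cases h : z ≤ a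
      · rw [hVdef]
        simp only [if_pos h]
        rw [max_eq_right (by linarith), mul_zero]
      · push_neg at h
        rw [hVdef]
        simp only [if_neg (not_le.mpr h)]
        rw [max_eq_left (by linarith)]
        rw [hcdef, hadef, hθdef]
        field_simp
        ring
    rw [hveq]
    exact ramp_lipschitz a c hcpos.le
  · -- the integral is negative
    -- pointwise facts about V and its derivative
    have hV0 : ∀ z, z ≤ a → V z = 0 := by
      intro z h; rw [hVdef]; exact if_pos h
    have hd0 : ∀ z, z < a → deriv V z = 0 := by
      intro z hz
      have h : V =ᶠ[nhds z] fun _ => (0:ℝ) := by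
        filter_upwards [Iio_mem_nhds hz] with y hy
        rw [hVdef]; exact if_pos (le_of_lt hy)
      rw [h.deriv_eq]; exact deriv_const _ _
    have hVel : ∀ z, a < z → V z = c * (z - a) := by
      intro z hz
      rw [hVdef]
      simp only [if_neg (not_le.mpr hz)]
      rw [hcdef, hadef, hθdef]
      field_simp
      ring
    have hdc : ∀ z, a < z → deriv V z = c := by
      intro z hz
      have h : V =ᶠ[nhds z] fun y => (y / b - θ) / (1 - θ) := by
        filter_upwards [Ioi_mem_nhds hz] with y hy
        rw [hVdef]; exact if_neg (not_le.mpr hy)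
      rw [h.deriv_eq]
      have hD : HasDerivAt (fun y : ℝ => (y / b - θ) / (1 - θ)) ((1 / b) / (1 - θ)) z := by
        have h1 := ((hasDerivAt_id z).div_const b).sub_const θ
        have h2 := h1.div_const (1 - θ)
        simpa using h2
      rw [hD.deriv, hcdef, hθdef]
      rw [eq_div_iff (by positivity)]
      field_simp
      ring
    -- the nice replacement integrand on the right-hand interval
    set g : ℝ → ℝ := fun z =>
      2*(2*Ω*(ρ₀ - β^2*z^2) - 1)*(c*(z - a))^2 + (ρ₀ - β^2*z^2)*c^2 with hgdef
    have hg_cont : Continuous g := by rw [hgdef]; fun_prop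
    have i2g : IntervalIntegrable g volume a b := hg_cont.intervalIntegrable a b
    -- left piece: integrand is a.e. zero
    have h' : ∀ᵐ z ∂(volume : Measure ℝ), z ∈ uIoc (-b) a →
        2*(2*Ω*(ρ₀ - β^2*z^2) - 1)*(V z)^2 + (ρ₀ - β^2*z^2)*(deriv V z)^2 = 0 := by
      have hnull : (volume : Measure ℝ) {a} = 0 := measure_singleton a
      filter_upwards [measure_eq_zero_iff_ae_notMem.mp hnull] with z hz hmem
      rw [uIoc_of_le hnba.le] at hmem
      have hlt : z < a := lt_of_le_of_ne hmem.2 (by simpa using hz)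
      rw [hV0 z hlt.le, hd0 z hlt]; ring
    have i1 : IntervalIntegrable
        (fun z => 2*(2*Ω*(ρ₀ - β^2*z^2) - 1)*(V z)^2 + (ρ₀ - β^2*z^2)*(deriv V z)^2)
        volume (-b) a := by
      refine (intervalIntegrable_const (c := (0:ℝ))).congr_ae ?_
      filter_upwards [ae_restrict_of_ae h', self_mem_ae_restrict measurableSet_uIoc]
        with z h1 h2
      exact (h1 h2).symm
    have h_left : (∫ z in (-b)..a,
        (2*(2*Ω*(ρ₀ - β^2*z^2) - 1)*(V z)^2 + (ρ₀ - β^2*z^2)*(deriv V z)^2)) = 0 := by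
      rw [intervalIntegral.integral_congr_ae h']
      simp
    -- right piece: integrand equals g on Ι a b
    have h'' : ∀ z ∈ uIoc a b,
        2*(2*Ω*(ρ₀ - β^2*z^2) - 1)*(V z)^2 + (ρ₀ - β^2*z^2)*(deriv V z)^2 = g z := by
      intro z hz
      rw [uIoc_of_le hab.le] at hz
      rw [hVel z hz.1, hdc z hz.1, hgdef]
    have i2 : IntervalIntegrable
        (fun z => 2*(2*Ω*(ρ₀ - β^2*z^2) - 1)*(V z)^2 + (ρ₀ - β^2*z^2)*(deriv V z)^2)
        volume a b := by
      refine i2g.congr_ae ?_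
      filter_upwards [self_mem_ae_restrict measurableSet_uIoc] with z hz
      exact (h'' z hz).symm
    have h_right : (∫ z in a..b,
        (2*(2*Ω*(ρ₀ - β^2*z^2) - 1)*(V z)^2 + (ρ₀ - β^2*z^2)*(deriv V z)^2))
        = ∫ z in a..b, g z :=
      intervalIntegral.integral_congr_ae (Filter.Eventually.of_forall h'')
    -- antiderivative of g
    set F : ℝ → ℝ := fun z => c^2 * ((-(4*Ω*β^2)/5)*z^5 + (a*(4*Ω*β^2)/2)*z^4
      + (((2*(2*Ω*ρ₀-1)) - a^2*(4*Ω*β^2) - β^2)/3)*z^3 + (-(a*(2*(2*Ω*ρ₀-1))))*z^2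
      + (a^2*(2*(2*Ω*ρ₀-1)) + ρ₀)*z) with hFdef
    have hFT : ∀ z ∈ uIcc a b, HasDerivAt F (g z) z := by
      intro z _
      have h5 : HasDerivAt (fun y : ℝ => y^5) (5*z^4) z := by
        simpa using hasDerivAt_pow 5 z
      have h4 : HasDerivAt (fun y : ℝ => y^4) (4*z^3) z := by
        simpa using hasDerivAt_pow 4 z
      have h3' : HasDerivAt (fun y : ℝ => y^3) (3*z^2) z := by
        simpa using hasDerivAt_pow 3 z
      have h2' : HasDerivAt (fun y : ℝ => y^2) (2*z) z := by
        simpa using hasDerivAt_pow 2 z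
      have h1' : HasDerivAt (fun y : ℝ => y) 1 z := hasDerivAt_id z
      have H := ((((h5.const_mul ((-(4*Ω*β^2)/5))).add
        (h4.const_mul (a*(4*Ω*β^2)/2))).add
        (h3'.const_mul (((2*(2*Ω*ρ₀-1)) - a^2*(4*Ω*β^2) - β^2)/3))).add
        (h2'.const_mul (-(a*(2*(2*Ω*ρ₀-1)))))).add
        (h1'.const_mul (a^2*(2*(2*Ω*ρ₀-1)) + ρ₀))
      have H2 := H.const_mul (c^2)
      rw [hFdef]
      refine H2.congr_deriv ?_
      rw [hgdef]
      ring
    have hInt : (∫ z in a..b, g z) = F b - F a :=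
      intervalIntegral.integral_eq_sub_of_hasDerivAt hFT i2g
    -- total integral
    have htot : (∫ z in (-b)..b,
        (2*(2*Ω*(ρ₀ - β^2*z^2) - 1)*(V z)^2 + (ρ₀ - β^2*z^2)*(deriv V z)^2))
        = F b - F a := by
      rw [← intervalIntegral.integral_add_adjacent_intervals i1 i2, h_left, h_right,
        hInt, zero_add]
    -- the closed form of the value
    have key : F b - F a = β*r*(6*β^2*Ω*r^2*(1 - 3*β^2/5) - 1 - β^2) := by
      rw [hFdef, hcdef, hadef, hθdef, hbdef, ← hr2]
      field_simp
      ring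
    -- the value is negative
    have h6 : (0:ℝ) < 6*β^2 := by positivity
    have hmul := mul_lt_mul_of_pos_right hΩ h6
    have hrhs : (1/6 + 1/(6*β^2))*(6*β^2) = 1 + β^2 := by field_simp; ring
    rw [hrhs] at hmul
    have hP : 0 < Ω*ρ₀ := mul_pos hΩpos hρ₀
    have hX : 6*β^2*Ω*r^2*(1 - 3*β^2/5) - 1 - β^2 < 0 := by
      rw [hr2]
      nlinarith [mul_nonneg (mul_pos h6 hP).le (by positivity : (0:ℝ) ≤ 3*β^2/5)]
    have hneg : F b - F a < 0 := by
      rw [key]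
      exact mul_neg_of_pos_of_neg (by positivity) hX
    linarith [htot, hneg]
end

section
/- Let ρ(z) = ρ₀ − β²z² and z_max = √ρ₀/β. For every Lipschitz function v on [−z_max, z_max] with ρ·v² vanishing at the endpoints, ∫_{−z_max}^{z_max} v² dz ≤ ∫_{−z_max}^{z_max} ρ(z)·[(3/(2ρ₀) + 1/(2ρ₀β²))v² + (1/2)v'²] dz. -/
open MeasureTheory

open Set Filter Function

set_option maxHeartbeats 1000000

/-- FTC-type inequality for continuous monotone functions. -/
lemma mono_ftc_le {f : ℝ → ℝ} (hf : Monotone f) (hc : Continuous f)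
    {a b : ℝ} (hab : a ≤ b) :
    ∫ x in a..b, deriv f x ≤ f b - f a := by
  have hst : ∀ x, hf.stieltjesFunction x = f x := by
    intro x
    rw [hf.stieltjesFunction_eq]
    exact rightLim_eq_of_tendsto
      (hc.continuousAt.continuousWithinAt : ContinuousWithinAt f (Ioi x) x)
  set μ := hf.stieltjesFunction.measure with hμ
  have hμIoc : μ (Ioc a b) = ENNReal.ofReal (f b - f a) := by
    rw [hμ, hf.stieltjesFunction.measure_Ioc, hst, hst]
  have hae : ∀ᵐ x, deriv f x = (μ.rnDeriv volume x).toReal := by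
    filter_upwards [hf.ae_hasDerivAt] with x hx using hx.deriv
  rw [intervalIntegral.integral_of_le hab]
  calc ∫ x in Ioc a b, deriv f x
      = ∫ x in Ioc a b, (μ.rnDeriv volume x).toReal :=
        integral_congr_ae (ae_restrict_of_ae hae)
    _ ≤ (μ (Ioc a b)).toReal :=
        Measure.setIntegral_toReal_rnDeriv_le (by rw [hμIoc]; exact ENNReal.ofReal_ne_top)
    _ = f b - f a := by rw [hμIoc, ENNReal.toReal_ofReal (by linarith [hf hab])]

/-- Derivative bound from a real Lipschitz bound (valid at every point). -/
lemma deriv_abs_le {f : ℝ → ℝ} {L : ℝ} (hL : 0 ≤ L)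
    (hf : ∀ x y, |f x - f y| ≤ L * |x - y|) (x : ℝ) : |deriv f x| ≤ L := by
  by_cases h : DifferentiableAt ℝ f x
  · have hd := h.hasDerivAt
    rw [hasDerivAt_iff_tendsto_slope] at hd
    refine le_of_tendsto hd.abs ?_
    filter_upwards [self_mem_nhdsWithin] with y hy
    have hne : y - x ≠ 0 := sub_ne_zero.2 hy
    rw [slope_def_field, abs_div, div_le_iff₀ (abs_pos.2 hne)]
    calc |f y - f x| ≤ L * |y - x| := hf y x
      _ = L * |y - x| := rfl
  · simp [deriv_zero_of_not_differentiableAt h, hL]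

/-- FTC-type lower bound for Lipschitz functions. -/
lemma lip_ftc_ge {f : ℝ → ℝ} {L : ℝ} (hL : 0 ≤ L)
    (hf : ∀ x y, |f x - f y| ≤ L * |x - y|) {a b : ℝ} (hab : a ≤ b) :
    f b - f a ≤ ∫ x in a..b, deriv f x := by
  have hlip : LipschitzWith (Real.toNNReal L) f := by
    apply LipschitzWith.of_dist_le_mul
    intro x y
    simpa [Real.dist_eq, Real.coe_toNNReal L hL] using hf x y
  set h : ℝ → ℝ := fun z => L * z - f z with hh
  have hmono : Monotone h := by
    intro x y hxy
    have h1 := (abs_le.1 (hf y x)).2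
    rw [abs_of_nonneg (sub_nonneg.2 hxy)] at h1
    simp only [hh]
    nlinarith
  have hcont : Continuous h := (continuous_const.mul continuous_id).sub hlip.continuous
  have key := mono_ftc_le hmono hcont hab
  have hderbd : ∀ x, |deriv f x| ≤ L := deriv_abs_le hL hf
  have hmeas : AEStronglyMeasurable (deriv f) (volume.restrict (Ioc a b)) :=
    (measurable_deriv f).aestronglyMeasurable.restrict
  have hvol : (volume.restrict (Ioc a b)) univ < ⊤ := by
    rw [Measure.restrict_apply_univ]
    exact measure_Ioc_lt_top
  have hint_f : IntegrableOn (deriv f) (Ioc a b) volume := by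
    exact Integrable.mono' (integrable_const L) hmeas (ae_of_all _ fun x => by
      simpa [Real.norm_eq_abs] using hderbd x)
  have hae : ∀ᵐ x, deriv h x = L - deriv f x := by
    filter_upwards [hlip.ae_differentiableAt_real] with x hx
    have h1 : HasDerivAt (fun z : ℝ => L * z) (L * 1) x := (hasDerivAt_id x).const_mul L
    have h2 := (h1.sub hx.hasDerivAt).deriv
    have h3 : deriv h x = L * 1 - deriv f x := h2
    simpa using h3
  have hint_h : IntegrableOn (deriv h) (Ioc a b) volume := by
    refine Integrable.congr ?_ (ae_restrict_of_ae (hae.mono fun x hx => hx.symm))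
    exact (integrable_const L).sub hint_f
  have heq : ∫ x in a..b, deriv h x = L * (b - a) - ∫ x in a..b, deriv f x := by
    rw [intervalIntegral.integral_of_le hab, intervalIntegral.integral_of_le hab]
    rw [integral_congr_ae (ae_restrict_of_ae hae)]
    rw [integral_sub (integrable_const L) hint_f]
    simp [Measure.restrict_apply_univ, Real.volume_Ioc, smul_eq_mul,
      ENNReal.toReal_ofReal (sub_nonneg.2 hab)]
    rw [max_eq_left (sub_nonneg.2 hab)]; ring
  rw [heq] at key
  simp only [hh] at key
  linarith

/-- weighted Poincaré-type inequality on [-z_max, z_max]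
with weight ρ(z) = ρ₀ - β²z². -/
theorem stmt_5 (ρ₀ β : ℝ) (hρ₀ : 0 < ρ₀) (hβ : 0 < β)
    (v : ℝ → ℝ) (K : NNReal) (hv : LipschitzWith K v)
    (hb1 : (ρ₀ - β^2 * (Real.sqrt ρ₀ / β)^2) * (v (Real.sqrt ρ₀ / β))^2 = 0)
    (hb2 : (ρ₀ - β^2 * (-(Real.sqrt ρ₀ / β))^2) * (v (-(Real.sqrt ρ₀ / β)))^2 = 0) :
    (∫ z in (-(Real.sqrt ρ₀ / β))..(Real.sqrt ρ₀ / β), (v z)^2)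
      ≤ ∫ z in (-(Real.sqrt ρ₀ / β))..(Real.sqrt ρ₀ / β),
          (ρ₀ - β^2*z^2) *
            ((3/(2*ρ₀) + 1/(2*ρ₀*β^2)) * (v z)^2 + (1/2) * (deriv v z)^2) := by
  set c : ℝ := Real.sqrt ρ₀ / β with hc
  have hs : 0 < Real.sqrt ρ₀ := Real.sqrt_pos.2 hρ₀
  have hcpos : 0 < c := div_pos hs hβ
  have hac : -c ≤ c := by linarith
  have hc2 : β ^ 2 * c ^ 2 = ρ₀ := by
    rw [hc, div_pow, mul_div_cancel₀ _ (by positivity), Real.sq_sqrt hρ₀.le]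
  -- real Lipschitz bound for v
  have hvL : ∀ x y, |v x - v y| ≤ (K : ℝ) * |x - y| := by
    intro x y
    have := hv.dist_le_mul x y
    simpa [Real.dist_eq] using this
  -- sup bound for |v| on [-c, c]
  set M : ℝ := |v 0| + (K : ℝ) * c with hM
  have hMnn : 0 ≤ M := by positivity
  have hvM : ∀ z, |z| ≤ c → |v z| ≤ M := by
    intro z hz
    have h1 := hvL z 0
    simp only [sub_zero] at h1
    have h2 : |v z| - |v 0| ≤ |v z - v 0| := by
      have := abs_sub_abs_le_abs_sub (v z) (v 0); linarith
    have hK : (0:ℝ) ≤ (K:ℝ) := K.coe_nonneg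
    nlinarith
  -- clamp
  set p : ℝ → ℝ := fun z => max (-c) (min c z) with hp
  have hp_mem : ∀ z, p z ∈ Icc (-c) c := by
    intro z
    constructor
    · exact le_max_left _ _
    · simp only [hp, max_le_iff]
      exact ⟨hac, min_le_left _ _⟩
  have hp_lip : ∀ x y, |p x - p y| ≤ |x - y| := by
    intro x y
    simp only [hp]
    calc |max (-c) (min c x) - max (-c) (min c y)| ≤ |min c x - min c y| := by
          simpa [max_comm] using abs_max_sub_max_le_abs (min c x) (min c y) (-c)
      _ ≤ |x - y| := by
          simpa using abs_min_sub_min_le_max c x c y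
  have hKnn : (0:ℝ) ≤ (K:ℝ) := K.coe_nonneg
  -- the function in the integration by parts
  set g : ℝ → ℝ := fun t => t * (ρ₀ - β^2*t^2) * (v t)^2 with hgdef
  set Cg : ℝ := 3*ρ₀*M^2 + 2*c*ρ₀*M*(K:ℝ) with hCg
  have hCgnn : 0 ≤ Cg := by positivity
  have hgL : ∀ x ∈ Icc (-c) c, ∀ y ∈ Icc (-c) c, |g x - g y| ≤ Cg * |x - y| := by
    intro x hx y hy
    have hxc : |x| ≤ c := abs_le.2 ⟨hx.1, hx.2⟩
    have hyc : |y| ≤ c := abs_le.2 ⟨hy.1, hy.2⟩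
    have hvx : |v x| ≤ M := hvM x hxc
    have hvy : |v y| ≤ M := hvM y hyc
    have hvx2 : (v x)^2 ≤ M^2 := sq_le_sq' (abs_le.1 hvx).1 (abs_le.1 hvx).2
    have hx2 : x^2 ≤ c^2 := sq_le_sq' (abs_le.1 hxc).1 (abs_le.1 hxc).2
    have hy2 : y^2 ≤ c^2 := sq_le_sq' (abs_le.1 hyc).1 (abs_le.1 hyc).2
    have hρx : |ρ₀ - β^2*x^2| ≤ ρ₀ := by
      rw [abs_le]
      have h3 := mul_le_mul_of_nonneg_left hx2 (sq_nonneg β)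
      have h4 : 0 ≤ β^2*x^2 := by positivity
      constructor <;> linarith [hc2]
    have hρy : |ρ₀ - β^2*y^2| ≤ ρ₀ := by
      rw [abs_le]
      have h3 := mul_le_mul_of_nonneg_left hy2 (sq_nonneg β)
      have h4 : 0 ≤ β^2*y^2 := by positivity
      constructor <;> linarith [hc2]
    have hid : g x - g y = (x - y) * ((ρ₀ - β^2*x^2) * (v x)^2)
        + (y * (β^2 * ((y + x) * (x - y) * (-1)))) * (v x)^2
        + (y * (ρ₀ - β^2*y^2)) * ((v x + v y) * (v x - v y)) := by
      simp only [hgdef]; ring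
    have hT1 : |(x - y) * ((ρ₀ - β^2*x^2) * (v x)^2)| ≤ (ρ₀ * M^2) * |x - y| := by
      rw [abs_mul, abs_mul, abs_of_nonneg (sq_nonneg (v x))]
      calc |x - y| * (|ρ₀ - β^2*x^2| * (v x)^2) ≤ |x - y| * (ρ₀ * M^2) := by
            gcongr
        _ = (ρ₀ * M^2) * |x - y| := by ring
    have hT2 : |(y * (β^2 * ((y + x) * (x - y) * (-1)))) * (v x)^2|
        ≤ (2*c^2*β^2*M^2) * |x - y| := by
      rw [abs_mul, abs_mul, abs_mul, abs_mul, abs_mul, abs_of_nonneg (sq_nonneg (v x)),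
        abs_of_nonneg (sq_nonneg β)]
      have hyx : |y + x| ≤ 2*c := by
        calc |y + x| ≤ |y| + |x| := abs_add_le _ _
          _ ≤ 2*c := by linarith
      calc |y| * (β^2 * (|y + x| * |x - y| * |(-1:ℝ)|)) * (v x)^2
          ≤ c * (β^2 * ((2*c) * |x - y| * |(-1:ℝ)|)) * M^2 := by
            gcongr
        _ = (2*c^2*β^2*M^2) * |x - y| := by simp [abs_of_nonneg]; ring
    have hT3 : |(y * (ρ₀ - β^2*y^2)) * ((v x + v y) * (v x - v y))|
        ≤ (2*c*ρ₀*M*(K:ℝ)) * |x - y| := by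
      rw [abs_mul, abs_mul, abs_mul]
      have hvxy : |v x - v y| ≤ (K:ℝ) * |x - y| := hvL x y
      have hvv : |v x + v y| ≤ 2*M := by
        calc |v x + v y| ≤ |v x| + |v y| := abs_add_le _ _
          _ ≤ 2*M := by linarith
      calc |y| * |ρ₀ - β^2*y^2| * (|v x + v y| * |v x - v y|)
          ≤ c * ρ₀ * ((2*M) * ((K:ℝ) * |x - y|)) := by
            gcongr
        _ = (2*c*ρ₀*M*(K:ℝ)) * |x - y| := by ring
    have hsum := abs_add_three ((x - y) * ((ρ₀ - β^2*x^2) * (v x)^2))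
      ((y * (β^2 * ((y + x) * (x - y) * (-1)))) * (v x)^2)
      ((y * (ρ₀ - β^2*y^2)) * ((v x + v y) * (v x - v y)))
    rw [← hid] at hsum
    have hcb : 2*c^2*β^2*M^2 = 2*ρ₀*M^2 := by nlinarith [hc2]
    calc |g x - g y| ≤ _ := hsum
      _ ≤ (ρ₀ * M^2) * |x - y| + (2*c^2*β^2*M^2) * |x - y| + (2*c*ρ₀*M*(K:ℝ)) * |x - y| := by
          linarith
      _ = Cg * |x - y| := by rw [hcb, hCg]; ring
  set G : ℝ → ℝ := fun z => g (p z) with hGdef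
  have hGL : ∀ x y, |G x - G y| ≤ Cg * |x - y| := by
    intro x y
    calc |G x - G y| ≤ Cg * |p x - p y| := hgL _ (hp_mem x) _ (hp_mem y)
      _ ≤ Cg * |x - y| := mul_le_mul_of_nonneg_left (hp_lip x y) hCgnn
  have hpc : p c = c := by
    simp only [hp, min_self]
    exact max_eq_right hac
  have hpnc : p (-c) = -c := by
    simp only [hp, min_eq_right hac]
    exact max_eq_left le_rfl
  have hgc : g c = 0 := by
    simp only [hgdef]
    have : ρ₀ - β^2*c^2 = 0 := by linarith [hc2]
    rw [this]; ring
  have hgnc : g (-c) = 0 := by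
    simp only [hgdef]
    have : ρ₀ - β^2*(-c)^2 = 0 := by nlinarith [hc2]
    rw [this]; ring
  have hDGnn : 0 ≤ ∫ x in (-c)..c, deriv G x := by
    have := lip_ftc_ge hCgnn hGL hac
    simp only [hGdef, hpc, hpnc, hgc, hgnc] at this
    linarith
  -- pointwise derivative bounds
  have hwbd : ∀ z, |deriv v z| ≤ (K:ℝ) := deriv_abs_le hKnn hvL
  have hGbd : ∀ z, |deriv G z| ≤ Cg := deriv_abs_le hCgnn hGL
  set F : ℝ → ℝ := fun z => (ρ₀ - β^2*z^2) *
      ((3/(2*ρ₀) + 1/(2*ρ₀*β^2)) * (v z)^2 + (1/2) * (deriv v z)^2) with hF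
  -- a.e. pointwise inequality
  have hnotc : ∀ᵐ z : ℝ, z ≠ c := by
    have hset : {z : ℝ | ¬ z ≠ c} = {c} := by ext t; simp
    rw [ae_iff, hset]
    exact measure_singleton c
  have hae2 : ∀ᵐ z ∂(volume.restrict (Ioc (-c) c)),
      (v z)^2 ≤ F z - (1/(2*ρ₀)) * deriv G z := by
    filter_upwards [ae_restrict_of_ae hv.ae_differentiableAt_real,
      ae_restrict_mem measurableSet_Ioc, ae_restrict_of_ae hnotc] with z hz hzI hzc
    have hzIoo : z ∈ Ioo (-c) c := ⟨hzI.1, lt_of_le_of_ne hzI.2 hzc⟩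
    have hEq : G =ᶠ[nhds z] g := by
      filter_upwards [isOpen_Ioo.mem_nhds hzIoo] with y hy
      simp only [hGdef, hp]
      rw [min_eq_right hy.2.le, max_eq_right hy.1.le]
    have hDG : deriv G z = (ρ₀ - 3*β^2*z^2) * (v z)^2
        + z*(ρ₀ - β^2*z^2)*(2*(v z)*(deriv v z)) := by
      have h1 := ((hasDerivAt_id z).mul
        (((hasDerivAt_pow 2 z).const_mul (β^2)).const_sub ρ₀)).mul ((hz.hasDerivAt).pow 2)
      rw [hEq.deriv_eq, hgdef]
      refine (h1.deriv).trans ?_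
      push_cast
      simp only [id, Pi.pow_apply, Pi.mul_apply]
      ring
    have hzc1 : (0:ℝ) ≤ c - z := by linarith [hzIoo.2.le]
    have hzc2 : (0:ℝ) ≤ c + z := by linarith [hzIoo.1.le]
    have hρnn : 0 ≤ ρ₀ - β^2*z^2 := by
      nlinarith [mul_nonneg (mul_nonneg hzc1 hzc2) (sq_nonneg β), hc2]
    have hu : (β^2*c)^2 = β^2*ρ₀ := by linear_combination β^2 * hc2
    have hInner' : 0 ≤ (v z)^2 + (β^2*c)^2*(deriv v z)^2
        - 2*β^2*z*(v z)*(deriv v z) := by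
      nlinarith [mul_nonneg hzc1 (sq_nonneg (v z + (β^2*c)*(deriv v z))),
        mul_nonneg hzc2 (sq_nonneg (v z - (β^2*c)*(deriv v z))), hcpos]
    have hInner : 0 ≤ (v z)^2 + ρ₀*β^2*(deriv v z)^2 - 2*β^2*z*(v z)*(deriv v z) := by
      have hbr : (β^2*c)^2*(deriv v z)^2 = ρ₀*β^2*(deriv v z)^2 := by
        linear_combination (deriv v z)^2 * hu
      linarith [hInner', hbr]
    have hP : 0 ≤ (ρ₀ - β^2*z^2) * ((v z)^2 + ρ₀*β^2*(deriv v z)^2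
        - 2*β^2*z*(v z)*(deriv v z)) := mul_nonneg hρnn hInner
    have hEqn : (ρ₀ - β^2*z^2) * ((3/(2*ρ₀) + 1/(2*ρ₀*β^2)) * (v z)^2 + (1/2) * (deriv v z)^2)
        - (1/(2*ρ₀)) * ((ρ₀ - 3*β^2*z^2) * (v z)^2 + z*(ρ₀ - β^2*z^2)*(2*(v z)*(deriv v z)))
        - (v z)^2
        = (1/(2*ρ₀*β^2)) * ((ρ₀ - β^2*z^2) * ((v z)^2 + ρ₀*β^2*(deriv v z)^2
            - 2*β^2*z*(v z)*(deriv v z))) := by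
      field_simp
      ring
    simp only [hF]
    rw [hDG]
    linarith [hEqn, mul_nonneg (show (0:ℝ) ≤ 1/(2*ρ₀*β^2) by positivity) hP]
  -- integrability
  have hInt1 : IntegrableOn (fun z => (v z)^2) (Ioc (-c) c) volume :=
    (hv.continuous.pow 2).integrableOn_Ioc
  have hInt2 : IntegrableOn F (Ioc (-c) c) volume := by
    have hmeas : AEStronglyMeasurable F (volume.restrict (Ioc (-c) c)) := by
      apply Measurable.aestronglyMeasurable
      rw [hF]
      exact ((measurable_const.sub ((measurable_id.pow_const 2).const_mul (β^2))).mul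
        (((hv.continuous.pow 2).measurable.const_mul _).add
          (((measurable_deriv v).pow_const 2).const_mul _)))
    refine Integrable.mono'
      (integrable_const (ρ₀ * ((3/(2*ρ₀) + 1/(2*ρ₀*β^2)) * M^2 + (1/2) * (K:ℝ)^2)))
      hmeas ?_
    filter_upwards [ae_restrict_mem measurableSet_Ioc] with z hzI
    have hzc : |z| ≤ c := abs_le.2 ⟨hzI.1.le, hzI.2⟩
    have hz2 : z^2 ≤ c^2 := sq_le_sq' (abs_le.1 hzc).1 (abs_le.1 hzc).2
    have hρ : |ρ₀ - β^2*z^2| ≤ ρ₀ := by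
      rw [abs_le]
      have h3 := mul_le_mul_of_nonneg_left hz2 (sq_nonneg β)
      have h4 : 0 ≤ β^2*z^2 := by positivity
      constructor <;> linarith [hc2]
    have hv2 : (v z)^2 ≤ M^2 :=
      sq_le_sq' (abs_le.1 (hvM z hzc)).1 (abs_le.1 (hvM z hzc)).2
    have hw2 : (deriv v z)^2 ≤ (K:ℝ)^2 :=
      sq_le_sq' (abs_le.1 (hwbd z)).1 (abs_le.1 (hwbd z)).2
    have hinn : 0 ≤ (3/(2*ρ₀) + 1/(2*ρ₀*β^2)) * (v z)^2 + (1/2)*(deriv v z)^2 := by positivity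
    simp only [hF, Real.norm_eq_abs]
    rw [abs_mul, abs_of_nonneg hinn]
    gcongr
  have hInt3 : IntegrableOn (deriv G) (Ioc (-c) c) volume := by
    refine Integrable.mono' (integrable_const Cg)
      (measurable_deriv G).aestronglyMeasurable.restrict (ae_of_all _ fun z => ?_)
    simpa [Real.norm_eq_abs] using hGbd z
  -- assembly
  have hmain : ∫ z in Ioc (-c) c, (v z)^2 ≤ ∫ z in Ioc (-c) c, F z := by
    have hIntRHS : IntegrableOn (fun z => F z - (1/(2*ρ₀)) * deriv G z) (Ioc (-c) c) volume :=
      hInt2.sub (hInt3.const_mul _)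
    have h0 : 0 ≤ ∫ z in Ioc (-c) c, deriv G z := by
      rw [← intervalIntegral.integral_of_le hac]
      exact hDGnn
    calc ∫ z in Ioc (-c) c, (v z)^2
        ≤ ∫ z in Ioc (-c) c, (F z - (1/(2*ρ₀)) * deriv G z) :=
          integral_mono_ae hInt1 hIntRHS hae2
      _ = (∫ z in Ioc (-c) c, F z) - (1/(2*ρ₀)) * ∫ z in Ioc (-c) c, deriv G z := by
          rw [integral_sub hInt2 (hInt3.const_mul _), integral_const_mul]
      _ ≤ ∫ z in Ioc (-c) c, F z := by
          nlinarith [mul_nonneg (show (0:ℝ) ≤ 1/(2*ρ₀) by positivity) h0]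
  rw [intervalIntegral.integral_of_le hac, intervalIntegral.integral_of_le hac]
  exact hmain
end

section
/- Let ρ(y,z) = ρ₀ − y² − β²z², Ωρ₀ > 1, D_g = {Ωρ > 1}, and let ±z_* be the intersections of the z-axis with ∂D_g, i.e. z_* = √(ρ₀ − 1/Ω)/β. For any bounded open set V ⊂ {ρ > 0} with Lipschitz boundary, ∫_{∂(D_g ∩ V)} (ρ − Ωρ²) dz = ∫_{D_g ∩ V} (1 − 2Ωρ) ∂_y ρ dy dz ≥ ∫_{D_g ∩ {y<0}} (1 − 2Ωρ) ∂_y ρ dy dz = ∫_{−z_*}^{z_*} (ρ(0,z) − Ωρ(0,z)²) dz, with equality iff D_g ∩ V = D_g ∩ {y < 0} up to measure zero. -/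
open MeasureTheory Set

/-- The Thomas-Fermi density in the (y,z)-plane. -/
noncomputable def tfRho (ρ₀ β : ℝ) (p : ℝ × ℝ) : ℝ := ρ₀ - p.1^2 - β^2 * p.2^2

/-- The good region D_g = {Ωρ > 1}. -/
def goodRegion (ρ₀ β Ω : ℝ) : Set (ℝ × ℝ) := {p | 1 < Ω * tfRho ρ₀ β p}

lemma goodRegion_eq {ρ₀ β Ω : ℝ} (hΩ : 0 < Ω) :
    goodRegion ρ₀ β Ω = {p : ℝ × ℝ | p.1^2 + β^2*p.2^2 < ρ₀ - 1/Ω} := by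
  have h1 : Ω * (1/Ω) = 1 := by field_simp
  ext p
  simp only [goodRegion, tfRho, mem_setOf_eq]
  constructor <;> intro h <;> nlinarith [sq_nonneg p.1, sq_nonneg p.2]

lemma tfRho_cont (ρ₀ β : ℝ) : Continuous (tfRho ρ₀ β) := by
  unfold tfRho; fun_prop

lemma integrableOn_good {ρ₀ β Ω : ℝ} (hβ : 0 < β) (hΩ : 0 < Ω) {S : Set (ℝ × ℝ)}
    (hS : S ⊆ goodRegion ρ₀ β Ω) :
    IntegrableOn (fun p : ℝ × ℝ => (1 - 2*Ω * tfRho ρ₀ β p) * (-2 * p.1)) S := by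
  have hcont : Continuous fun p : ℝ × ℝ => (1 - 2*Ω * tfRho ρ₀ β p) * (-2 * p.1) := by
    have := tfRho_cont ρ₀ β; fun_prop
  set a := Real.sqrt (ρ₀ - 1/Ω) with ha
  set b := Real.sqrt (ρ₀ - 1/Ω) / β with hb
  have hK : IsCompact (Icc (-a) a ×ˢ Icc (-b) b) := isCompact_Icc.prod isCompact_Icc
  have hsub : S ⊆ Icc (-a) a ×ˢ Icc (-b) b := by
    intro p hp
    have hp' := hS hp
    rw [goodRegion_eq hΩ] at hp'
    simp only [mem_setOf_eq] at hp'
    have h1 : p.1^2 ≤ ρ₀ - 1/Ω := by nlinarith [mul_nonneg (sq_nonneg β) (sq_nonneg p.2)]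
    have hc : (0:ℝ) ≤ ρ₀ - 1/Ω := le_trans (sq_nonneg p.1) h1
    have h2 : p.2^2 ≤ (ρ₀ - 1/Ω)/β^2 := by
      rw [le_div_iff₀ (by positivity)]; nlinarith [sq_nonneg p.1]
    constructor
    · have := Real.sqrt_le_sqrt h1
      rw [Real.sqrt_sq_eq_abs] at this
      exact abs_le.mp this
    · have := Real.sqrt_le_sqrt h2
      rw [Real.sqrt_sq_eq_abs, Real.sqrt_div hc, Real.sqrt_sq hβ.le] at this
      exact abs_le.mp this
  exact (hcont.continuousOn.integrableOn_compact hK).mono_set hsub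


lemma inner_slice {ρ₀ β Ω : ℝ} (hβ : 0 < β) (hΩ : 0 < Ω) (hc₀ : 0 < ρ₀ - 1/Ω) (z : ℝ) :
    (∫ y : ℝ, ((goodRegion ρ₀ β Ω ∩ {p : ℝ × ℝ | p.1 < 0}).indicator
        (fun p => (1 - 2*Ω * tfRho ρ₀ β p) * (-2 * p.1)) (y, z)))
      = (Ioo (-(Real.sqrt (ρ₀ - 1/Ω) / β)) (Real.sqrt (ρ₀ - 1/Ω) / β)).indicator
          (fun z => (ρ₀ - β^2*z^2) - Ω * (ρ₀ - β^2*z^2)^2) z := by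
  set c := ρ₀ - 1/Ω - β^2*z^2 with hc
  set zs := Real.sqrt (ρ₀ - 1/Ω) / β with hzs
  have hzs0 : 0 ≤ zs := by positivity
  have hmem : ∀ y : ℝ, ((y, z) ∈ goodRegion ρ₀ β Ω ∩ {p : ℝ × ℝ | p.1 < 0}) ↔
      y ∈ Ioo (-(Real.sqrt c)) 0 := by
    intro y
    rw [goodRegion_eq hΩ]
    simp only [mem_inter_iff, mem_setOf_eq, mem_Ioo]
    constructor
    · rintro ⟨h1, h2⟩
      have hy2 : y^2 < c := by rw [hc]; nlinarith
      have : |y| < Real.sqrt c := by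
        rw [← Real.sqrt_sq_eq_abs]
        exact Real.sqrt_lt_sqrt (sq_nonneg y) hy2
      exact ⟨(abs_lt.mp this).1, h2⟩
    · rintro ⟨h1, h2⟩
      have hsp : 0 < Real.sqrt c := by linarith [h1.trans h2]
      have hy2 : y^2 < c := by
        have habs : |y| < Real.sqrt c := by
          rw [abs_of_neg h2]; linarith
        have := (Real.lt_sqrt (abs_nonneg y)).mp habs
        simpa [sq_abs] using this
      exact ⟨by rw [hc] at hy2; nlinarith, h2⟩
  have hslice : (fun y => ((goodRegion ρ₀ β Ω ∩ {p : ℝ × ℝ | p.1 < 0}).indicator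
        (fun p => (1 - 2*Ω * tfRho ρ₀ β p) * (-2 * p.1)) (y, z)))
      = (Ioo (-(Real.sqrt c)) 0).indicator
          (fun y => (1 - 2*Ω * (ρ₀ - y^2 - β^2*z^2)) * (-2 * y)) := by
    funext y
    by_cases hy : (y, z) ∈ goodRegion ρ₀ β Ω ∩ {p : ℝ × ℝ | p.1 < 0}
    · rw [indicator_of_mem hy, indicator_of_mem ((hmem y).mp hy)]
      simp [tfRho]
    · rw [indicator_of_notMem hy, indicator_of_notMem (fun h => hy ((hmem y).mpr h))]
  rw [hslice]
  by_cases hcpos : 0 < c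
  · -- interesting case
    have hzmem : z ∈ Ioo (-zs) zs := by
      have hz2 : z^2 < (ρ₀ - 1/Ω)/β^2 := by
        rw [lt_div_iff₀ (by positivity)]; rw [hc] at hcpos; nlinarith
      have : |z| < zs := by
        have h := Real.sqrt_lt_sqrt (sq_nonneg z) hz2
        rw [Real.sqrt_sq_eq_abs, Real.sqrt_div hc₀.le, Real.sqrt_sq hβ.le] at h
        exact h
      exact mem_Ioo.mpr (abs_lt.mp this)
    rw [indicator_of_mem hzmem]
    have hsc : Real.sqrt c ^ 2 = c := Real.sq_sqrt hcpos.le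
    have hle : -(Real.sqrt c) ≤ 0 := neg_nonpos_of_nonneg (Real.sqrt_nonneg c)
    rw [integral_indicator measurableSet_Ioo]
    rw [← integral_Ioc_eq_integral_Ioo, ← intervalIntegral.integral_of_le hle]
    have hcontz : Continuous fun y : ℝ => (1 - 2*Ω * (ρ₀ - y^2 - β^2*z^2)) * (-2 * y) := by
      fun_prop
    have hF : ∀ y ∈ uIcc (-(Real.sqrt c)) (0:ℝ),
        HasDerivAt (fun y : ℝ => (ρ₀ - y^2 - β^2*z^2) - Ω * (ρ₀ - y^2 - β^2*z^2)^2)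
          ((1 - 2*Ω * (ρ₀ - y^2 - β^2*z^2)) * (-2 * y)) y := by
      intro y _
      have h1 : HasDerivAt (fun y : ℝ => ρ₀ - y^2 - β^2*z^2) (-2*y) y := by
        have := ((hasDerivAt_pow 2 y).const_sub ρ₀).sub_const (β^2*z^2)
        exact this.congr_deriv (by norm_num)
      have h2 := h1.sub ((h1.pow 2).const_mul Ω)
      exact h2.congr_deriv (by norm_num; ring)
    rw [intervalIntegral.integral_eq_sub_of_hasDerivAt hF (hcontz.intervalIntegrable _ _)]
    have e1 : ρ₀ - (-(Real.sqrt c))^2 - β^2*z^2 = 1/Ω := by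
      rw [show (-(Real.sqrt c))^2 = Real.sqrt c ^ 2 from by ring, hsc, hc]; ring
    rw [e1]
    have h2 : Ω * (1/Ω)^2 = 1/Ω := by field_simp
    rw [h2]
    ring
  · -- empty slice
    push_neg at hcpos
    have h1 : Real.sqrt c = 0 := Real.sqrt_eq_zero'.mpr hcpos
    have hzne : z ∉ Ioo (-zs) zs := by
      intro hzmem
      have hsq : z^2 < zs^2 := sq_lt_sq' hzmem.1 hzmem.2
      have hzs2 : zs^2 = (ρ₀ - 1/Ω)/β^2 := by
        rw [hzs, div_pow, Real.sq_sqrt hc₀.le]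
      rw [hzs2, lt_div_iff₀ (by positivity)] at hsq
      rw [hc] at hcpos
      nlinarith
    rw [indicator_of_notMem hzne, h1, neg_zero]
    simp

lemma isOpen_good {ρ₀ β Ω : ℝ} : IsOpen (goodRegion ρ₀ β Ω) :=
  isOpen_lt continuous_const (continuous_const.mul (tfRho_cont ρ₀ β))

lemma straight_eq {ρ₀ β Ω : ℝ} (hβ : 0 < β) (hΩ : 0 < Ω) (hc₀ : 0 < ρ₀ - 1/Ω) :
    (∫ p in goodRegion ρ₀ β Ω ∩ {p : ℝ × ℝ | p.1 < 0},
        (1 - 2*Ω * tfRho ρ₀ β p) * (-2 * p.1))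
      = ∫ z in (-(Real.sqrt (ρ₀ - 1/Ω) / β))..(Real.sqrt (ρ₀ - 1/Ω) / β),
          ((ρ₀ - β^2*z^2) - Ω * (ρ₀ - β^2*z^2)^2) := by
  set A := goodRegion ρ₀ β Ω ∩ {p : ℝ × ℝ | p.1 < 0} with hA
  set zs := Real.sqrt (ρ₀ - 1/Ω) / β with hzs
  have hzs0 : 0 ≤ zs := by positivity
  have hAmeas : MeasurableSet A :=
    (isOpen_good.inter (isOpen_lt continuous_fst continuous_const)).measurableSet
  have hint : IntegrableOn (fun p : ℝ × ℝ => (1 - 2*Ω * tfRho ρ₀ β p) * (-2 * p.1)) A :=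
    integrableOn_good hβ hΩ inter_subset_left
  have hind : Integrable (A.indicator fun p : ℝ × ℝ => (1 - 2*Ω * tfRho ρ₀ β p) * (-2 * p.1)) :=
    (integrable_indicator_iff hAmeas).mpr hint
  rw [← integral_indicator hAmeas]
  rw [MeasureTheory.Measure.volume_eq_prod] at hind ⊢
  rw [MeasureTheory.integral_prod_symm _ hind]
  have := fun z => inner_slice (ρ₀ := ρ₀) hβ hΩ hc₀ z
  rw [integral_congr_ae (Filter.Eventually.of_forall this)]
  rw [integral_indicator measurableSet_Ioo, ← integral_Ioc_eq_integral_Ioo,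
    ← intervalIntegral.integral_of_le (by linarith : -zs ≤ zs)]

lemma line_null : volume {p : ℝ × ℝ | p.1 = 0} = 0 := by
  have h : {p : ℝ × ℝ | p.1 = 0} = ({0} : Set ℝ) ×ˢ (univ : Set ℝ) := by
    ext ⟨x, y⟩; simp [Set.mem_prod, eq_comm]
  rw [h, MeasureTheory.Measure.volume_eq_prod, MeasureTheory.Measure.prod_prod]
  simp

lemma null_of_integral_zero {g : ℝ × ℝ → ℝ} (hg : Continuous g) {S : Set (ℝ × ℝ)}
    (hSm : MeasurableSet S) (hSint : IntegrableOn g S)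
    (hSpos : ∀ p ∈ S, 0 ≤ g p) (hS0 : (∫ p in S, g p) = 0)
    (hScov : S ⊆ {p : ℝ × ℝ | ¬ g p = 0} ∪ {p : ℝ × ℝ | p.1 = 0}) :
    volume S = 0 := by
  have hgm : MeasurableSet {p : ℝ × ℝ | ¬ g p = 0} :=
    (isOpen_ne_fun hg continuous_const).measurableSet
  have hae : g =ᵐ[volume.restrict S] 0 := by
    refine (setIntegral_eq_zero_iff_of_nonneg_ae ?_ hSint).mp hS0
    exact (ae_restrict_iff' hSm).mpr (Filter.Eventually.of_forall fun p hp => by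
      simpa using hSpos p hp)
  have h1' : ∀ᵐ p ∂(volume.restrict S), g p = 0 := hae.mono fun x hx => by simpa using hx
  rw [ae_iff] at h1'
  rw [Measure.restrict_apply hgm] at h1'
  refine le_antisymm ?_ zero_le
  calc volume S ≤ volume (({p : ℝ × ℝ | ¬ g p = 0} ∩ S) ∪ {p : ℝ × ℝ | p.1 = 0}) := by
        refine measure_mono fun p hp => ?_
        rcases hScov hp with h | h
        · exact Or.inl ⟨h, hp⟩
        · exact Or.inr h
    _ ≤ volume ({p : ℝ × ℝ | ¬ g p = 0} ∩ S) + volume {p : ℝ × ℝ | p.1 = 0} :=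
        measure_union_le _ _
    _ ≤ 0 := by rw [h1', line_null]; simp


/-- the bulk integral ∫_{D_g ∩ V} (1 - 2Ωρ) ∂_yρ (which by Stokes
equals the good-region part of the vortex energy) is minimized exactly when
D_g ∩ V = D_g ∩ {y < 0} (up to measure zero), where it equals the straight
vortex energy ∫_{-z_*}^{z_*} (ρ(0,z) - Ωρ(0,z)²) dz, z_* = √(ρ₀ - 1/Ω)/β. -/
theorem stmt_8 (ρ₀ β Ω : ℝ) (hρ₀ : 0 < ρ₀) (hβ : 0 < β) (hΩ : 1 < Ω * ρ₀)
    (V : Set (ℝ × ℝ)) (hVopen : IsOpen V) (hVb : Bornology.IsBounded V)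
    (hVD : V ⊆ {p : ℝ × ℝ | 0 < tfRho ρ₀ β p}) :
    ((∫ p in goodRegion ρ₀ β Ω ∩ {p : ℝ × ℝ | p.1 < 0},
        (1 - 2*Ω * tfRho ρ₀ β p) * (-2 * p.1))
      ≤ ∫ p in goodRegion ρ₀ β Ω ∩ V,
        (1 - 2*Ω * tfRho ρ₀ β p) * (-2 * p.1))
    ∧ ((∫ p in goodRegion ρ₀ β Ω ∩ {p : ℝ × ℝ | p.1 < 0},
        (1 - 2*Ω * tfRho ρ₀ β p) * (-2 * p.1))
      = ∫ z in (-(Real.sqrt (ρ₀ - 1/Ω) / β))..(Real.sqrt (ρ₀ - 1/Ω) / β),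
          ((ρ₀ - β^2*z^2) - Ω * (ρ₀ - β^2*z^2)^2))
    ∧ ((∫ p in goodRegion ρ₀ β Ω ∩ V,
          (1 - 2*Ω * tfRho ρ₀ β p) * (-2 * p.1))
        = (∫ p in goodRegion ρ₀ β Ω ∩ {p : ℝ × ℝ | p.1 < 0},
            (1 - 2*Ω * tfRho ρ₀ β p) * (-2 * p.1))
      ↔ volume (((goodRegion ρ₀ β Ω ∩ V) \ (goodRegion ρ₀ β Ω ∩ {p : ℝ × ℝ | p.1 < 0}))
          ∪ ((goodRegion ρ₀ β Ω ∩ {p : ℝ × ℝ | p.1 < 0}) \ (goodRegion ρ₀ β Ω ∩ V))) = 0) := by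
  have hΩ0 : 0 < Ω := by nlinarith
  have hc₀ : 0 < ρ₀ - 1/Ω := by rw [sub_pos, div_lt_iff₀ hΩ0]; nlinarith
  set f : ℝ × ℝ → ℝ := fun p => (1 - 2*Ω * tfRho ρ₀ β p) * (-2 * p.1) with hfdef
  have hfcont : Continuous f := by
    have := tfRho_cont ρ₀ β; rw [hfdef]; fun_prop
  set G := goodRegion ρ₀ β Ω with hGdef
  set Y : Set (ℝ × ℝ) := {p : ℝ × ℝ | p.1 < 0} with hYdef
  have hYopen : IsOpen Y := isOpen_lt continuous_fst continuous_const
  have hYm : MeasurableSet Y := hYopen.measurableSet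
  have hGm : MeasurableSet G := isOpen_good.measurableSet
  have hAm : MeasurableSet (G ∩ Y) := hGm.inter hYm
  have hBm : MeasurableSet (G ∩ V) := hGm.inter hVopen.measurableSet
  have hfneg : ∀ p ∈ G, 1 - 2*Ω * tfRho ρ₀ β p < 0 := by
    intro p hp
    have : 1 < Ω * tfRho ρ₀ β p := hp
    linarith
  have intA : IntegrableOn f (G ∩ Y) := integrableOn_good hβ hΩ0 inter_subset_left
  have intB : IntegrableOn f (G ∩ V) := integrableOn_good hβ hΩ0 inter_subset_left
  have hBsubA : (G ∩ V) ∩ Y ⊆ G ∩ Y := fun p hp => ⟨hp.1.1, hp.2⟩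
  -- step 1
  have hnn : 0 ≤ᵐ[volume.restrict (G ∩ Y)] fun p => -f p := by
    refine (ae_restrict_iff' hAm).mpr (Filter.Eventually.of_forall fun p hp => ?_)
    have h1 := hfneg p hp.1
    have h2 : p.1 < 0 := hp.2
    simp only [Pi.zero_apply, hfdef]
    nlinarith
  have step1 : (∫ p in G ∩ Y, f p) ≤ ∫ p in (G ∩ V) ∩ Y, f p := by
    have hmono := setIntegral_mono_set (f := fun p => -f p) (s := (G ∩ V) ∩ Y) (t := G ∩ Y)
      intA.neg hnn (HasSubset.Subset.eventuallyLE hBsubA)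
    simp only [integral_neg] at hmono
    linarith
  -- step 2
  have hsplit := integral_inter_add_diff (s := G ∩ V) (t := Y) hYm intB
  have hposd : 0 ≤ ∫ p in (G ∩ V) \ Y, f p := by
    refine setIntegral_nonneg (hBm.diff hYm) fun p hp => ?_
    have h1 := hfneg p hp.1.1
    have h2 : ¬ p.1 < 0 := hp.2
    simp only [hfdef]
    nlinarith [not_lt.mp h2]
  have step2 : (∫ p in (G ∩ V) ∩ Y, f p) ≤ ∫ p in G ∩ V, f p := by linarith
  refine ⟨step1.trans step2, straight_eq hβ hΩ0 hc₀, ?_⟩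
  constructor
  · -- equality ⇒ null symm diff
    intro heq
    have eq2 : (∫ p in (G ∩ V) \ Y, f p) = 0 := by linarith
    have eq1 : (∫ p in (G ∩ Y) \ ((G ∩ V) ∩ Y), f p) = 0 := by
      have hsplit2 := integral_inter_add_diff (s := G ∩ Y) (t := (G ∩ V) ∩ Y)
        (hBm.inter hYm) intA
      rw [inter_eq_right.mpr hBsubA] at hsplit2
      linarith
    have hBA : (G ∩ V) \ (G ∩ Y) = (G ∩ V) \ Y := by
      ext p
      simp only [mem_diff, mem_inter_iff]
      tauto
    have hAB : (G ∩ Y) \ (G ∩ V) = (G ∩ Y) \ ((G ∩ V) ∩ Y) := by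
      ext p
      simp only [mem_diff, mem_inter_iff]
      tauto
    have hB0 : volume ((G ∩ V) \ Y) = 0 := by
      refine null_of_integral_zero hfcont (hBm.diff hYm) (intB.mono_set diff_subset) ?_ eq2 ?_
      · intro p hp
        have h1 := hfneg p hp.1.1
        have h2 : ¬ p.1 < 0 := hp.2
        simp only [hfdef]
        nlinarith [not_lt.mp h2]
      · intro p hp
        have h2 : ¬ p.1 < 0 := hp.2
        rcases eq_or_lt_of_le (not_lt.mp h2) with h | h
        · exact Or.inr h.symm
        · refine Or.inl ?_
          have h1 := hfneg p hp.1.1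
          simp only [mem_setOf_eq, hfdef]
          nlinarith
    have hA0 : volume ((G ∩ Y) \ ((G ∩ V) ∩ Y)) = 0 := by
      refine null_of_integral_zero hfcont.neg (hAm.diff (hBm.inter hYm))
        ((intA.mono_set diff_subset).neg) ?_ ?_ ?_
      · intro p hp
        have h1 := hfneg p hp.1.1
        have h2 : p.1 < 0 := hp.1.2
        simp only [hfdef, Pi.neg_apply]
        nlinarith
      · simp only [Pi.neg_apply]; rw [integral_neg, eq1, neg_zero]
      · intro p hp
        refine Or.inl ?_
        have h1 := hfneg p hp.1.1
        have h2 : p.1 < 0 := hp.1.2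
        simp only [mem_setOf_eq, hfdef, Pi.neg_apply]
        nlinarith
    rw [hBA, hAB]
    exact measure_union_null hB0 hA0
  · -- null symm diff ⇒ equality
    intro hnull
    have hae := measure_symmDiff_eq_zero_iff (μ := volume) (s := G ∩ V) (t := G ∩ Y) |>.mp
      (by rw [Set.symmDiff_def]; exact hnull)
    exact setIntegral_congr_set hae
end

section
/- Let ρ(y,z) = ρ₀ − y² − β²z² with β ≥ 1, Ωρ₀ > 1. Let γ(t) = (y(t), z(t)) be a Lipschitz curve in the bad region D_b = {0 < ρ ≤ 1/Ω}. Define ζ̃(t) = −(1/β)(y(t)² + β²z(t)²)^{1/2} and ζ(t) = max_{s ≤ t} ζ̃(s). Then for a.e. t, ρ(γ(t))|γ'(t)| − Ωρ(γ(t))² z'(t) ≥ ρ(0,ζ(t))·ζ'(t) − Ωρ(0,ζ(t))²·ζ'(t). -/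
open MeasureTheory Set

set_option maxHeartbeats 1600000 in
/-- comparison of a curve in the bad region (β ≥ 1) with the
straight vortex, via ζ(t) = max_{s ≤ t} ζ̃(s), ζ̃ = -(1/β)√(y² + β²z²). -/
theorem stmt_9 (ρ₀ β Ω : ℝ) (hρ₀ : 0 < ρ₀) (hβ : 1 ≤ β) (hΩ : 1 < Ω * ρ₀)
    (y z : ℝ → ℝ) (Ky Kz : NNReal)
    (hy : LipschitzWith Ky y) (hz : LipschitzWith Kz z)
    (hbad : ∀ t ∈ Icc (0:ℝ) 1,
      0 < ρ₀ - (y t)^2 - β^2*(z t)^2 ∧ Ω * (ρ₀ - (y t)^2 - β^2*(z t)^2) ≤ 1)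
    (ζ : ℝ → ℝ)
    (hζ : ∀ t, ζ t =
      sSup ((fun s => -(1/β) * Real.sqrt ((y s)^2 + β^2*(z s)^2)) '' Icc (0:ℝ) t)) :
    ∀ᵐ t ∂(volume.restrict (Icc (0:ℝ) 1)),
      ((ρ₀ - β^2*(ζ t)^2) - Ω * (ρ₀ - β^2*(ζ t)^2)^2) * deriv ζ t
        ≤ (ρ₀ - (y t)^2 - β^2*(z t)^2) * Real.sqrt ((deriv y t)^2 + (deriv z t)^2)
          - Ω * (ρ₀ - (y t)^2 - β^2*(z t)^2)^2 * deriv z t := by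
  set f : ℝ → ℝ := fun s => -(1/β) * Real.sqrt ((y s)^2 + β^2*(z s)^2) with hfdef
  have hβ0 : (0:ℝ) < β := lt_of_lt_of_le one_pos hβ
  have hΩ0 : 0 < Ω := by by_contra h; push_neg at h; nlinarith
  have hfc : Continuous f := by
    apply continuous_const.mul
    exact Real.continuous_sqrt.comp
      (((hy.continuous.pow 2)).add (continuous_const.mul (hz.continuous.pow 2)))
  have hbdd : ∀ t : ℝ, BddAbove (f '' Icc 0 t) :=
    fun t => (isCompact_Icc.image hfc).bddAbove
  have hmono : ∀ s t : ℝ, 0 ≤ s → s ≤ t → ζ s ≤ ζ t := by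
    intro s t h0 hst
    rw [hζ s, hζ t]
    exact csSup_le_csSup (hbdd t) ((nonempty_Icc.mpr h0).image f)
      (image_mono (Icc_subset_Icc_right hst))
  have hle : ∀ t : ℝ, 0 ≤ t → f t ≤ ζ t := by
    intro t h0
    rw [hζ t]
    exact le_csSup (hbdd t) ⟨t, ⟨h0, le_refl t⟩, rfl⟩
  have hmax : ∀ t : ℝ, 0 ≤ t → ∃ u ∈ Icc (0:ℝ) t, ζ t = f u := by
    intro t h0
    obtain ⟨u, hu, hmaxu⟩ := isCompact_Icc.exists_isMaxOn (nonempty_Icc.mpr h0)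
      hfc.continuousOn
    refine ⟨u, hu, le_antisymm ?_ ?_⟩
    · rw [hζ t]
      refine csSup_le ((nonempty_Icc.mpr h0).image f) ?_
      rintro v ⟨w, hw, rfl⟩
      exact hmaxu hw
    · rw [hζ t]
      exact le_csSup (hbdd t) ⟨u, hu, rfl⟩
  -- a.e. facts
  have hIcc : volume.restrict (Icc (0:ℝ) 1) = volume.restrict (Ioo (0:ℝ) 1) :=
    (Measure.restrict_congr_set Ioo_ae_eq_Icc).symm
  have h01 : ∀ᵐ t ∂(volume.restrict (Icc (0:ℝ) 1)), t ∈ Ioo (0:ℝ) 1 := by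
    rw [hIcc]; exact ae_restrict_mem measurableSet_Ioo
  have hay : ∀ᵐ t ∂(volume.restrict (Icc (0:ℝ) 1)), DifferentiableAt ℝ y t :=
    ae_restrict_of_ae hy.ae_differentiableAt
  have haz : ∀ᵐ t ∂(volume.restrict (Icc (0:ℝ) 1)), DifferentiableAt ℝ z t :=
    ae_restrict_of_ae hz.ae_differentiableAt
  filter_upwards [h01, hay, haz] with t ht hty htz
  have htIcc : t ∈ Icc (0:ℝ) 1 := Ioo_subset_Icc_self ht
  obtain ⟨hρpos, hρle⟩ := hbad t htIcc
  -- the RHS is always nonnegative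
  have hbS : deriv z t ≤ Real.sqrt ((deriv y t)^2 + (deriv z t)^2) := by
    calc deriv z t ≤ |deriv z t| := le_abs_self _
    _ = Real.sqrt ((deriv z t)^2) := (Real.sqrt_sq_eq_abs _).symm
    _ ≤ _ := Real.sqrt_le_sqrt (by nlinarith [sq_nonneg (deriv y t)])
  have hS0 : 0 ≤ Real.sqrt ((deriv y t)^2 + (deriv z t)^2) := Real.sqrt_nonneg _
  have hRHS : 0 ≤ (ρ₀ - (y t)^2 - β^2*(z t)^2) * Real.sqrt ((deriv y t)^2 + (deriv z t)^2)
          - Ω * (ρ₀ - (y t)^2 - β^2*(z t)^2)^2 * deriv z t := by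
    nlinarith [mul_le_mul_of_nonneg_left hbS
        (mul_nonneg hΩ0.le (mul_nonneg hρpos.le hρpos.le)),
      mul_le_mul_of_nonneg_right hρle (mul_nonneg hρpos.le hS0)]
  by_cases hft : f t < ζ t
  · -- ζ is locally constant at t
    have hev : ∀ᶠ s in nhds t, f s < ζ t ∧ 0 < s := by
      have h1 : ∀ᶠ s in nhds t, f s < ζ t :=
        (isOpen_lt hfc continuous_const).mem_nhds hft
      have h2 : ∀ᶠ s in nhds t, 0 < s := isOpen_Ioi.mem_nhds ht.1
      exact h1.and h2
    obtain ⟨ε, hε, hP⟩ := Metric.eventually_nhds_iff.mp hev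
    have hconst : ∀ᶠ s in nhds t, ζ s = ζ t := by
      filter_upwards [Metric.ball_mem_nhds t hε] with s hs
      rw [Metric.mem_ball, Real.dist_eq, abs_lt] at hs
      have hs0 : 0 < s := (hP (by rw [Real.dist_eq, abs_lt]; exact hs)).2
      rcases le_total t s with hts | hst
      · refine le_antisymm ?_ (hmono t s ht.1.le hts)
        obtain ⟨u, hu, hζs⟩ := hmax s hs0.le
        rw [hζs]
        rcases le_total u t with h1 | h1
        · rw [hζ t]
          exact le_csSup (hbdd t) ⟨u, ⟨hu.1, h1⟩, rfl⟩
        · exact (hP (show dist u t < ε by rw [Real.dist_eq, abs_lt]; exact ⟨by linarith [hu.2], by linarith [hu.2]⟩)).1.le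
      · refine le_antisymm (hmono s t hs0.le hst) ?_
        obtain ⟨u, hu, hζt⟩ := hmax t ht.1.le
        rcases le_total u s with h1 | h1
        · rw [hζt, hζ s]
          exact le_csSup (hbdd s) ⟨u, ⟨hu.1, h1⟩, rfl⟩
        · exfalso
          have := (hP (show dist u t < ε by rw [Real.dist_eq, abs_lt]; exact ⟨by linarith [hu.2], by linarith [hu.2]⟩)).1
          rw [← hζt] at this
          exact lt_irrefl _ this
    have hd0 : deriv ζ t = 0 := by
      rw [Filter.EventuallyEq.deriv_eq hconst]; exact deriv_const t _
    rw [hd0, mul_zero]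
    exact hRHS
  · -- ζ t = f t
    have hfe : f t = ζ t := le_antisymm (hle t ht.1.le) (not_lt.mp hft)
    by_cases hdiff : DifferentiableAt ℝ ζ t
    · -- compute the derivative of f at t
      have hG : 0 < (y t)^2 + β^2*(z t)^2 := by nlinarith
      have hs2 : Real.sqrt ((y t)^2 + β^2*(z t)^2) ^ 2 = (y t)^2 + β^2*(z t)^2 :=
        Real.sq_sqrt hG.le
      have hs0 : 0 < Real.sqrt ((y t)^2 + β^2*(z t)^2) := Real.sqrt_pos.mpr hG
      have hgd : HasDerivAt (fun s => (y s)^2 + β^2*(z s)^2)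
          (2 * y t ^ 1 * deriv y t + β^2 * (2 * z t ^ 1 * deriv z t)) t :=
        (hty.hasDerivAt.pow 2).add ((htz.hasDerivAt.pow 2).const_mul (β^2))
      have hsq : HasDerivAt (fun s => Real.sqrt ((y s)^2 + β^2*(z s)^2))
          (1 / (2 * Real.sqrt ((y t)^2 + β^2*(z t)^2)) *
            (2 * y t ^ 1 * deriv y t + β^2 * (2 * z t ^ 1 * deriv z t))) t :=
        (Real.hasDerivAt_sqrt hG.ne').comp t hgd
      have hfd : HasDerivAt f
          (-((y t * deriv y t + β^2 * (z t * deriv z t)) /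
              (β * Real.sqrt ((y t)^2 + β^2*(z t)^2)))) t := by
        have h := hsq.const_mul (-(1/β))
        refine h.congr_deriv ?_
        have := hs0.ne'
        have := hβ0.ne'
        field_simp
      -- ζ - f has a local min at t, so deriv ζ t = deriv f t
      have hmin : IsLocalMin (fun s => ζ s - f s) t := by
        have h2 : ∀ᶠ s in nhds t, 0 < s := isOpen_Ioi.mem_nhds ht.1
        filter_upwards [h2] with s hs0
        simp only [← hfe]
        have := hle s hs0.le
        linarith
      have hder : deriv ζ t = -((y t * deriv y t + β^2 * (z t * deriv z t)) /
          (β * Real.sqrt ((y t)^2 + β^2*(z t)^2))) := by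
        have h0 := hmin.deriv_eq_zero
        rw [deriv_fun_sub hdiff hfd.differentiableAt, hfd.deriv] at h0
        linarith
      -- bound on the derivative
      have key : (y t * deriv y t + β^2 * (z t * deriv z t))^2
          ≤ ((y t)^2 + β^2*(z t)^2) * ((deriv y t)^2 + β^2*(deriv z t)^2) := by
        nlinarith [sq_nonneg (y t * (β * deriv z t) - β * z t * deriv y t)]
      have hβ2 : (1:ℝ) ≤ β^2 := by nlinarith
      have hd2 : (deriv ζ t)^2 ≤ (deriv y t)^2 + (deriv z t)^2 := by
        rw [hder, neg_sq, div_pow, mul_pow, hs2,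
          div_le_iff₀ (by positivity)]
        calc (y t * deriv y t + β^2*(z t * deriv z t))^2
            ≤ ((y t)^2 + β^2*(z t)^2) * ((deriv y t)^2 + β^2*(deriv z t)^2) := key
          _ ≤ ((y t)^2 + β^2*(z t)^2) * (β^2*((deriv y t)^2 + (deriv z t)^2)) := by
              refine mul_le_mul_of_nonneg_left ?_ hG.le
              nlinarith [mul_le_mul_of_nonneg_right hβ2 (sq_nonneg (deriv y t))]
          _ = ((deriv y t)^2 + (deriv z t)^2) * (β^2 * ((y t)^2 + β^2*(z t)^2)) := by ring
      have hdS : deriv ζ t ≤ Real.sqrt ((deriv y t)^2 + (deriv z t)^2) := by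
        calc deriv ζ t ≤ |deriv ζ t| := le_abs_self _
        _ = Real.sqrt ((deriv ζ t)^2) := (Real.sqrt_sq_eq_abs _).symm
        _ ≤ _ := Real.sqrt_le_sqrt hd2
      -- rewrite ρ(0, ζ t)
      have hz2 : β^2 * (ζ t)^2 = (y t)^2 + β^2*(z t)^2 := by
        rw [← hfe, hfdef]
        have hβne : β ≠ 0 := hβ0.ne'
        field_simp
        exact hs2
      rw [hz2]
      have h1 : 0 ≤ (ρ₀ - ((y t)^2 + β^2*(z t)^2))
          - Ω * (ρ₀ - ((y t)^2 + β^2*(z t)^2))^2 := by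
        nlinarith [mul_nonneg hρpos.le (sub_nonneg.mpr hρle)]
      have p1 := mul_le_mul_of_nonneg_left hdS h1
      have p2 := mul_le_mul_of_nonneg_left hbS
        (mul_nonneg hΩ0.le (mul_nonneg hρpos.le hρpos.le))
      ring_nf at p1 p2 ⊢
      linarith [p1, p2]
    · rw [deriv_zero_of_not_differentiableAt hdiff, mul_zero]
      exact hRHS
end

section
/- Let 0 < β ≤ 1, ρ(y,z) = ρ₀ − y² − β²z² on D = {ρ > 0}. Then for every connected bounded open set U ⊂ D with Lipschitz boundary, |∫_{∂U} ρ² dz| ≤ (2√ρ₀)^{1/2} · (∫_{∂U} ρ dl)^{3/2}. -/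
open MeasureTheory Set intervalIntegral Filter Topology


lemma lip_deriv_II {K : NNReal} {g : ℝ → ℝ} (hg : LipschitzWith K g) (a b : ℝ) :
    IntervalIntegrable (deriv g) volume a b := by
  rw [intervalIntegrable_iff]
  have hfin : volume (Set.uIoc a b) < ⊤ := by rw [Set.uIoc]; exact measure_Ioc_lt_top
  exact (integrableOn_const (C := (K:ℝ)) hfin.ne).mono'
      (measurable_deriv g).aestronglyMeasurable
      (Eventually.of_forall fun t => by
        simpa using norm_deriv_le_of_lipschitz hg (x₀ := t))

lemma lip_ftc {K : NNReal} {g : ℝ → ℝ} (hg : LipschitzWith K g) {a b : ℝ} (hab : a ≤ b) :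
    ∫ t in a..b, deriv g t = g b - g a := by
  have hgc : Continuous g := hg.continuous
  have hgi : ∀ c d : ℝ, IntervalIntegrable g volume c d := fun c d =>
    hgc.intervalIntegrable c d
  -- the sequence hₙ = 1/(n+1)
  set h : ℕ → ℝ := fun n => 1 / ((n : ℝ) + 1) with hh
  have hpos : ∀ n, 0 < h n := fun n => by positivity
  have hne : ∀ n, h n ≠ 0 := fun n => (hpos n).ne'
  have htend : Tendsto h atTop (𝓝 0) := tendsto_one_div_add_atTop_nhds_zero_nat
  have htend' : Tendsto h atTop (𝓝[≠] 0) := by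
    rw [tendsto_nhdsWithin_iff]
    exact ⟨htend, Eventually.of_forall fun n => hne n⟩
  -- endpoint limits
  have endpt : ∀ c : ℝ, Tendsto (fun n => (h n)⁻¹ * ∫ x in c..(c + h n), g x) atTop (𝓝 (g c)) := by
    intro c
    have hD : HasDerivAt (fun u => ∫ x in c..u, g x) (g c) c :=
      integral_hasDerivAt_right (hgi c c)
        (hgc.stronglyMeasurableAtFilter volume (𝓝 c)) hgc.continuousAt
    have := hasDerivAt_iff_tendsto_slope_zero.1 hD
    have h2 := this.comp htend'
    simp only [Function.comp_def, smul_eq_mul] at h2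
    refine h2.congr fun n => ?_
    rw [intervalIntegral.integral_interval_sub_left (hgi c (c + h n)) (hgi c c)]
  -- the difference quotient integrals converge to g b - g a
  have quotlim : Tendsto (fun n => ∫ t in a..b, (g (t + h n) - g t) / h n) atTop
      (𝓝 (g b - g a)) := by
    have key : ∀ n, ∫ t in a..b, (g (t + h n) - g t) / h n
        = (h n)⁻¹ * (∫ x in b..(b + h n), g x) - (h n)⁻¹ * (∫ x in a..(a + h n), g x) := by
      intro n
      have h1 : ∫ t in a..b, (g (t + h n) - g t) / h n
          = (∫ t in a..b, (g (t + h n) - g t)) / h n := intervalIntegral.integral_div _ _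
      have h2 : ∫ t in a..b, (g (t + h n) - g t)
          = (∫ t in a..b, g (t + h n)) - ∫ t in a..b, g t := by
        exact intervalIntegral.integral_sub
          ((hgc.comp (continuous_id.add continuous_const)).intervalIntegrable a b) (hgi a b)
      have h3 : (∫ t in a..b, g (t + h n)) = ∫ x in (a + h n)..(b + h n), g x :=
        integral_comp_add_right g (h n)
      have h4 : (∫ x in (a + h n)..(b + h n), g x) - ∫ t in a..b, g t
          = (∫ x in b..(b + h n), g x) - ∫ x in a..(a + h n), g x := by
        have e1 : (∫ x in (a + h n)..b, g x) + ∫ x in b..(b + h n), g x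
            = ∫ x in (a + h n)..(b + h n), g x :=
          integral_add_adjacent_intervals (hgi _ _) (hgi _ _)
        have e2 : (∫ x in a..(a + h n), g x) + ∫ x in (a + h n)..b, g x
            = ∫ x in a..b, g x := integral_add_adjacent_intervals (hgi _ _) (hgi _ _)
        linarith
      rw [h1, h2, h3, h4, sub_div, div_eq_inv_mul, div_eq_inv_mul]
    simp only [key]
    exact ((endpt b).sub (endpt a))
  -- dominated convergence
  have dct : Tendsto (fun n => ∫ t in a..b, (g (t + h n) - g t) / h n) atTop
      (𝓝 (∫ t in a..b, deriv g t)) := by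
    have hmeas : ∀ n, AEStronglyMeasurable (fun t => (g (t + h n) - g t) / h n)
        (volume.restrict (Ioc a b)) :=
      fun n => (((hgc.comp (continuous_id.add continuous_const)).sub hgc).div_const
        (h n)).aestronglyMeasurable
    have hbound : ∀ n, ∀ᵐ t ∂(volume.restrict (Ioc a b)),
        ‖(g (t + h n) - g t) / h n‖ ≤ (K : ℝ) := by
      intro n
      refine Eventually.of_forall fun t => ?_
      have := hg.dist_le_mul (t + h n) t
      rw [Real.dist_eq, Real.dist_eq] at this
      simp only [add_sub_cancel_left] at this
      rw [norm_div, Real.norm_eq_abs, Real.norm_eq_abs, abs_of_pos (hpos n)] at *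
      rw [div_le_iff₀ (hpos n)]
      simpa [abs_of_pos (hpos n)] using this
    have hlim : ∀ᵐ t ∂(volume.restrict (Ioc a b)),
        Tendsto (fun n => (g (t + h n) - g t) / h n) atTop (𝓝 (deriv g t)) := by
      filter_upwards [ae_restrict_of_ae hg.ae_differentiableAt_real] with t ht
      have hD : HasDerivAt g (deriv g t) t := ht.hasDerivAt
      have := (hasDerivAt_iff_tendsto_slope_zero.1 hD).comp htend'
      simp only [Function.comp_def, smul_eq_mul] at this
      exact this.congr fun n => by rw [div_eq_inv_mul]
    have := MeasureTheory.tendsto_integral_of_dominated_convergence (fun _ => (K : ℝ))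
      hmeas (integrableOn_const measure_Ioc_lt_top.ne) hbound hlim
    have e : ∀ (F : ℝ → ℝ), ∫ t in a..b, F t = ∫ t in Ioc a b, F t := fun F =>
      intervalIntegral.integral_of_le hab
    simpa only [e] using this
  exact tendsto_nhds_unique dct quotlim

lemma two_osc_le {K : NNReal} {G : ℝ → ℝ} (hG : LipschitzWith K G) {s u : ℝ}
    (hs : s ∈ Icc (0:ℝ) 1) (hu : u ∈ Icc (0:ℝ) 1) (hsu : s ≤ u) (hcl : G 0 = G 1) :
    2 * |G u - G s| ≤ ∫ t in (0:ℝ)..1, |deriv G t| := by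
  have hI : ∀ a b : ℝ, IntervalIntegrable (fun t => |deriv G t|) volume a b := fun a b =>
    (lip_deriv_II hG a b).abs
  have h1 : |G u - G s| ≤ ∫ t in s..u, |deriv G t| := by
    rw [← lip_ftc hG hsu]
    exact abs_integral_le_integral_abs hsu
  have h2 : |G u - G s| ≤ (∫ t in (0:ℝ)..s, |deriv G t|) + ∫ t in u..1, |deriv G t| := by
    have e : G u - G s = -((G s - G 0) + (G 1 - G u)) := by rw [hcl]; ring
    calc |G u - G s| = |(G s - G 0) + (G 1 - G u)| := by rw [e, abs_neg]
      _ ≤ |G s - G 0| + |G 1 - G u| := abs_add_le _ _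
      _ ≤ (∫ t in (0:ℝ)..s, |deriv G t|) + ∫ t in u..1, |deriv G t| := by
          refine add_le_add ?_ ?_
          · rw [← lip_ftc hG hs.1]; exact abs_integral_le_integral_abs hs.1
          · rw [← lip_ftc hG hu.2]; exact abs_integral_le_integral_abs hu.2
  have hadd : ((∫ t in (0:ℝ)..s, |deriv G t|) + (∫ t in s..u, |deriv G t|))
      + (∫ t in u..1, |deriv G t|) = ∫ t in (0:ℝ)..1, |deriv G t| := by
    rw [integral_add_adjacent_intervals (hI 0 s) (hI s u),
      integral_add_adjacent_intervals (hI 0 u) (hI u 1)]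
  linarith [h1, h2]

set_option maxHeartbeats 1000000 in
/-- isoperimetric-type inequality
|∫_{∂U} ρ² dz| ≤ (2√ρ₀)^{1/2} (∫_{∂U} ρ dl)^{3/2} for 0 < β ≤ 1, where
∂U is parametrized by a simple closed Lipschitz curve γ. -/
theorem stmt_12 (ρ₀ β : ℝ) (hρ₀ : 0 < ρ₀) (hβ0 : 0 < β) (hβ : β ≤ 1)
    (U : Set (ℝ × ℝ)) (hUopen : IsOpen U) (hUconn : IsConnected U)
    (hUb : Bornology.IsBounded U) (hUD : U ⊆ {p | 0 < tfRho ρ₀ β p})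
    (γ : ℝ → ℝ × ℝ) (K : NNReal) (hγ : LipschitzWith K γ)
    (hclosed : γ 0 = γ 1) (hinj : InjOn γ (Ico (0:ℝ) 1))
    (hbd : frontier U = γ '' Icc (0:ℝ) 1) :
    |∫ t in (0:ℝ)..1, (tfRho ρ₀ β (γ t))^2 * deriv (fun s => (γ s).2) t|
      ≤ Real.sqrt (2 * Real.sqrt ρ₀) *
        (∫ t in (0:ℝ)..1, tfRho ρ₀ β (γ t) *
          Real.sqrt ((deriv (fun s => (γ s).1) t)^2
            + (deriv (fun s => (γ s).2) t)^2)) ^ ((3:ℝ)/2) := by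
  clear hUopen hUconn hUb hinj
  set y : ℝ → ℝ := fun s => (γ s).1 with hy
  set z : ℝ → ℝ := fun s => (γ s).2 with hz
  set f : ℝ → ℝ := fun t => tfRho ρ₀ β (γ t) with hf
  set D : ℝ → ℝ := fun t => Real.sqrt ((deriv y t)^2 + (deriv z t)^2) with hD
  show |∫ t in (0:ℝ)..1, (f t)^2 * deriv z t|
      ≤ Real.sqrt (2 * Real.sqrt ρ₀) * (∫ t in (0:ℝ)..1, f t * D t) ^ ((3:ℝ)/2)
  -- Lipschitz components
  have hyL : LipschitzWith K y := LipschitzWith.of_dist_le_mul fun a b => by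
    calc dist (y a) (y b) ≤ dist (γ a) (γ b) := by
          rw [Prod.dist_eq]; exact le_max_left _ _
      _ ≤ K * dist a b := hγ.dist_le_mul a b
  have hzL : LipschitzWith K z := LipschitzWith.of_dist_le_mul fun a b => by
    calc dist (z a) (z b) ≤ dist (γ a) (γ b) := by
          rw [Prod.dist_eq]; exact le_max_right _ _
      _ ≤ K * dist a b := hγ.dist_le_mul a b
  have hfc : Continuous f := by
    have : Continuous γ := hγ.continuous
    show Continuous fun t => ρ₀ - (γ t).1^2 - β^2 * (γ t).2^2
    fun_prop
  -- min and max of f on [0,1]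
  have hIcc : (Icc (0:ℝ) 1).Nonempty := ⟨0, by norm_num⟩
  obtain ⟨t₀, ht₀, hmin⟩ := (isCompact_Icc (a := (0:ℝ)) (b := 1)).exists_isMinOn hIcc
    hfc.continuousOn
  obtain ⟨t₁, ht₁, hmax⟩ := (isCompact_Icc (a := (0:ℝ)) (b := 1)).exists_isMaxOn hIcc
    hfc.continuousOn
  set m : ℝ := f t₀ with hm
  set M : ℝ := f t₁ with hM
  have hfm : ∀ t ∈ Icc (0:ℝ) 1, m ≤ f t := fun t ht => hmin ht
  have hfub : ∀ t ∈ Icc (0:ℝ) 1, f t ≤ M := fun t ht => hmax ht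
  have hmM : m ≤ M := hfm t₁ ht₁
  -- nonnegativity of f on the curve
  have hm0 : 0 ≤ m := by
    have h1 : γ t₀ ∈ frontier U := by rw [hbd]; exact mem_image_of_mem _ ht₀
    have h2 : IsClosed {p : ℝ × ℝ | 0 ≤ tfRho ρ₀ β p} := by
      have : Continuous (tfRho ρ₀ β) := by unfold tfRho; fun_prop
      exact isClosed_le continuous_const this
    have h3 : closure U ⊆ {p : ℝ × ℝ | 0 ≤ tfRho ρ₀ β p} :=
      closure_minimal (fun p hp => show (0:ℝ) ≤ tfRho ρ₀ β p from le_of_lt (hUD hp)) h2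
    exact h3 (frontier_subset_closure h1)
  have hft0 : ∀ t ∈ Icc (0:ℝ) 1, 0 ≤ f t := fun t ht => hm0.trans (hfm t ht)
  -- derivative bounds
  have hdy : ∀ t, |deriv y t| ≤ (K:ℝ) := fun t => by
    simpa using norm_deriv_le_of_lipschitz hyL (x₀ := t)
  have hdz : ∀ t, |deriv z t| ≤ (K:ℝ) := fun t => by
    simpa using norm_deriv_le_of_lipschitz hzL (x₀ := t)
  have sqrt_sq_add : ∀ a b : ℝ, Real.sqrt (a^2 + b^2) ≤ |a| + |b| := fun a b => by
    rw [show |a| + |b| = Real.sqrt ((|a| + |b|)^2) from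
      (Real.sqrt_sq (by positivity)).symm]
    apply Real.sqrt_le_sqrt
    nlinarith [abs_nonneg a, abs_nonneg b, sq_abs a, sq_abs b]
  have hD0 : ∀ t, 0 ≤ D t := fun t => Real.sqrt_nonneg _
  have hDb : ∀ t, D t ≤ 2*(K:ℝ) := fun t => by
    calc D t ≤ |deriv y t| + |deriv z t| := sqrt_sq_add _ _
      _ ≤ (K:ℝ) + (K:ℝ) := add_le_add (hdy t) (hdz t)
      _ = 2*(K:ℝ) := by ring
  have hDz : ∀ t, |deriv z t| ≤ D t := fun t => by
    rw [← Real.sqrt_sq_eq_abs]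
    exact Real.sqrt_le_sqrt (by nlinarith [sq_nonneg (deriv y t)])
  have hDmeas : Measurable D := by
    apply Measurable.sqrt
    exact ((measurable_deriv y).pow_const 2).add ((measurable_deriv z).pow_const 2)
  -- integrability package
  have hfin : volume (Set.uIoc (0:ℝ) 1) < ⊤ := by rw [Set.uIoc]; exact measure_Ioc_lt_top
  have hIocIcc : Set.uIoc (0:ℝ) 1 ⊆ Icc (0:ℝ) 1 := by
    rw [Set.uIoc_of_le (by norm_num : (0:ℝ) ≤ 1)]; exact Ioc_subset_Icc_self
  have hII : ∀ (F : ℝ → ℝ), Measurable F → (∀ t ∈ Icc (0:ℝ) 1, |F t| ≤ ((M^2+1) * (2*(K:ℝ)+1))) →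
      IntervalIntegrable F volume 0 1 := by
    intro F hFm hFb
    rw [intervalIntegrable_iff]
    refine Integrable.mono' (g := fun _ => ((M^2+1) * (2*(K:ℝ)+1)))
        (integrableOn_const hfin.ne) hFm.aestronglyMeasurable ?_
    filter_upwards [ae_restrict_mem measurableSet_uIoc] with t ht
    exact (hFb t (hIocIcc ht))
  have hM0 : 0 ≤ M := hm0.trans hmM
  have hfabs : ∀ t ∈ Icc (0:ℝ) 1, |f t| ≤ M := fun t ht =>
    abs_le.2 ⟨by linarith [hft0 t ht], hfub t ht⟩
  have hIz : IntervalIntegrable (deriv z) volume 0 1 := lip_deriv_II hzL 0 1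
  have hIL : IntervalIntegrable (fun t => f t * D t) volume 0 1 := by
    refine hII _ (hfc.measurable.mul hDmeas) (fun t ht => ?_)
    rw [abs_mul, abs_of_nonneg (hD0 t)]
    have h1 : |f t| * D t ≤ M * (2*(K:ℝ)) :=
      mul_le_mul (hfabs t ht) (hDb t) (hD0 t) hM0
    nlinarith [mul_nonneg (NNReal.coe_nonneg K) (sq_nonneg (M - 1/2)), sq_nonneg M,
      NNReal.coe_nonneg K, hM0]
  have hI1 : IntervalIntegrable (fun t => (f t)^2 * deriv z t) volume 0 1 := by
    refine hII _ ((hfc.measurable.pow_const 2).mul (measurable_deriv z)) (fun t ht => ?_)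
    rw [abs_mul]
    have h1 : |(f t)^2| * |deriv z t| ≤ M^2 * (K:ℝ) := by
      refine mul_le_mul ?_ (hdz t) (abs_nonneg _) (by positivity)
      rw [abs_of_nonneg (sq_nonneg (f t)), ← sq_abs]
      exact pow_le_pow_left₀ (abs_nonneg _) (hfabs t ht) 2
    nlinarith [mul_nonneg (NNReal.coe_nonneg K) (sq_nonneg M), sq_nonneg M,
      NNReal.coe_nonneg K]
  set L : ℝ := ∫ t in (0:ℝ)..1, f t * D t with hL
  -- ∫ deriv z = 0
  have hT : (∫ t in (0:ℝ)..1, deriv z t) = 0 := by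
    rw [lip_ftc hzL (by norm_num : (0:ℝ) ≤ 1)]
    show (γ 1).2 - (γ 0).2 = 0
    rw [← hclosed]; ring
  have hI2 : IntervalIntegrable (fun t => ((f t)^2 - M*m) * deriv z t) volume 0 1 := by
    have e : (fun t => ((f t)^2 - M*m) * deriv z t)
        = fun t => (f t)^2 * deriv z t - (M*m) * deriv z t := by funext t; ring
    rw [e]
    exact hI1.sub (hIz.const_mul _)
  have hIMm : IntervalIntegrable (fun t => (M - m) * (f t * D t)) volume 0 1 :=
    hIL.const_mul _
  -- main identity
  have hid : (∫ t in (0:ℝ)..1, (f t)^2 * deriv z t)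
      = ∫ t in (0:ℝ)..1, ((f t)^2 - M*m) * deriv z t := by
    have e : (fun t => ((f t)^2 - M*m) * deriv z t)
        = fun t => (f t)^2 * deriv z t - (M*m) * deriv z t := by funext t; ring
    rw [e, intervalIntegral.integral_sub hI1 (hIz.const_mul _),
      intervalIntegral.integral_const_mul, hT]
    ring
  -- pointwise bound and LHS estimate
  have hLHS : |∫ t in (0:ℝ)..1, (f t)^2 * deriv z t| ≤ (M - m) * L := by
    rw [hid]
    calc |∫ t in (0:ℝ)..1, ((f t)^2 - M*m) * deriv z t|
        ≤ ∫ t in (0:ℝ)..1, |((f t)^2 - M*m) * deriv z t| :=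
          abs_integral_le_integral_abs (by norm_num)
      _ ≤ ∫ t in (0:ℝ)..1, (M - m) * (f t * D t) := by
          refine integral_mono_on (by norm_num) hI2.abs hIMm (fun t ht => ?_)
          rw [abs_mul]
          have h1 : |(f t)^2 - M*m| ≤ (M - m) * f t := by
            refine abs_le.2 ⟨?_, ?_⟩
            · nlinarith [mul_nonneg (sub_nonneg.2 (hfm t ht))
                (add_nonneg (hft0 t ht) hM0)]
            · nlinarith [mul_nonneg (sub_nonneg.2 (hfub t ht))
                (add_nonneg (hft0 t ht) hm0)]
          calc |(f t)^2 - M*m| * |deriv z t| ≤ ((M - m) * f t) * D t :=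
                mul_le_mul h1 (hDz t) (abs_nonneg _)
                  (mul_nonneg (sub_nonneg.2 (hmM)) (hft0 t ht))
            _ = (M - m) * (f t * D t) := by ring
      _ = (M - m) * L := by rw [intervalIntegral.integral_const_mul]
  have hL0 : 0 ≤ L := intervalIntegral.integral_nonneg (by norm_num)
    (fun t ht => mul_nonneg (hft0 t ht) (hD0 t))
  -- extension of g = f^2
  set g : ℝ → ℝ := fun t => (f t)^2 with hg
  set B : ℝ := ‖γ 0‖ + 2*(K:ℝ) with hBdef
  have hB0 : 0 ≤ B := by positivity
  have hβ2 : β^2 ≤ 1 := by nlinarith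
  have hB : ∀ t ∈ Icc (-1:ℝ) 2, ‖γ t‖ ≤ B := by
    intro t ht
    have h1 : dist (γ t) (γ 0) ≤ (K:ℝ) * dist t 0 := hγ.dist_le_mul t 0
    have h2 : dist t 0 ≤ 2 := by
      rw [Real.dist_eq, sub_zero]; exact abs_le.2 ⟨by linarith [ht.1], ht.2⟩
    have h3 := norm_add_le (γ t - γ 0) (γ 0)
    rw [sub_add_cancel] at h3
    rw [← dist_eq_norm] at h3
    have h4 : (K:ℝ) * dist t 0 ≤ (K:ℝ) * 2 :=
      mul_le_mul_of_nonneg_left h2 (NNReal.coe_nonneg K)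
    rw [hBdef]; linarith
  have hyB : ∀ t ∈ Icc (-1:ℝ) 2, |y t| ≤ B := fun t ht => by
    have h := norm_fst_le (γ t)
    rw [Real.norm_eq_abs] at h
    exact h.trans (hB t ht)
  have hzB : ∀ t ∈ Icc (-1:ℝ) 2, |z t| ≤ B := fun t ht => by
    have h := norm_snd_le (γ t)
    rw [Real.norm_eq_abs] at h
    exact h.trans (hB t ht)
  set Cf : ℝ := |ρ₀| + 2*B^2 with hCf
  have hCf0 : 0 ≤ Cf := by positivity
  have hfB : ∀ t ∈ Icc (-1:ℝ) 2, |f t| ≤ Cf := by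
    intro t ht
    have h1 := hyB t ht
    have h2 := hzB t ht
    have e : f t = ρ₀ - (y t)^2 - β^2*(z t)^2 := rfl
    rw [e, hCf]
    have hy2 : (y t)^2 ≤ B^2 := sq_le_sq' (abs_le.1 h1).1 (abs_le.1 h1).2
    have hz2 : (z t)^2 ≤ B^2 := sq_le_sq' (abs_le.1 h2).1 (abs_le.1 h2).2
    have hbz : β^2*(z t)^2 ≤ (z t)^2 := mul_le_of_le_one_left (sq_nonneg (z t)) hβ2
    refine abs_le.2 ⟨?_, ?_⟩
    · nlinarith [neg_abs_le ρ₀]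
    · nlinarith [sq_nonneg (y t), mul_nonneg (sq_nonneg β) (sq_nonneg (z t)),
        le_abs_self ρ₀]
  have hflip : ∀ t ∈ Icc (-1:ℝ) 2, ∀ s ∈ Icc (-1:ℝ) 2,
      |f t - f s| ≤ (4*B*(K:ℝ)) * |t - s| := by
    intro t ht s hs
    have hyd : |y t - y s| ≤ (K:ℝ)*|t-s| := by
      have := hyL.dist_le_mul t s
      rwa [Real.dist_eq, Real.dist_eq] at this
    have hzd : |z t - z s| ≤ (K:ℝ)*|t-s| := by
      have := hzL.dist_le_mul t s
      rwa [Real.dist_eq, Real.dist_eq] at this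
    have hyy : |y s + y t| ≤ 2*B := by
      have h1 := hyB t ht; have h2 := hyB s hs
      calc |y s + y t| ≤ |y s| + |y t| := abs_add_le _ _
        _ ≤ 2*B := by linarith
    have hzz : |z s + z t| ≤ 2*B := by
      have h1 := hzB t ht; have h2 := hzB s hs
      calc |z s + z t| ≤ |z s| + |z t| := abs_add_le _ _
        _ ≤ 2*B := by linarith
    have h1 : |y s - y t| * |y s + y t| ≤ ((K:ℝ)*|t-s|) * (2*B) :=
      mul_le_mul (by rw [abs_sub_comm]; exact hyd) hyy (abs_nonneg _) (by positivity)
    have h2 : |z s - z t| * |z s + z t| ≤ ((K:ℝ)*|t-s|) * (2*B) :=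
      mul_le_mul (by rw [abs_sub_comm]; exact hzd) hzz (abs_nonneg _) (by positivity)
    have e : f t - f s = (y s - y t)*(y s + y t) + β^2*((z s - z t)*(z s + z t)) := by
      show (ρ₀ - (y t)^2 - β^2*(z t)^2) - (ρ₀ - (y s)^2 - β^2*(z s)^2) = _
      ring
    calc |f t - f s|
        = |(y s - y t)*(y s + y t) + β^2*((z s - z t)*(z s + z t))| := by rw [e]
      _ ≤ |(y s - y t)*(y s + y t)| + |β^2*((z s - z t)*(z s + z t))| := abs_add_le _ _
      _ = |y s - y t| * |y s + y t| + β^2*(|z s - z t| * |z s + z t|) := by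
          rw [abs_mul, abs_mul, abs_mul, abs_of_nonneg (sq_nonneg β)]
      _ ≤ ((K:ℝ)*|t-s|)*(2*B) + 1*(((K:ℝ)*|t-s|)*(2*B)) := by
          refine add_le_add h1 (mul_le_mul hβ2 h2 ?_ (by norm_num))
          positivity
      _ = (4*B*(K:ℝ))*|t-s| := by ring
  have hglipOn : LipschitzOnWith (Real.toNNReal (8*Cf*B*(K:ℝ))) g (Icc (-1:ℝ) 2) := by
    rw [lipschitzOnWith_iff_dist_le_mul]
    intro t ht s hs
    rw [Real.dist_eq, Real.dist_eq, Real.coe_toNNReal _ (by positivity)]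
    have e2 : g t - g s = (f t - f s)*(f t + f s) := by show (f t)^2 - (f s)^2 = _; ring
    have hsum : |f t + f s| ≤ 2*Cf := by
      have h1 := hfB t ht; have h2 := hfB s hs
      calc |f t + f s| ≤ |f t| + |f s| := abs_add_le _ _
        _ ≤ 2*Cf := by linarith
    calc |g t - g s| = |f t - f s| * |f t + f s| := by rw [e2, abs_mul]
      _ ≤ ((4*B*(K:ℝ))*|t-s|) * (2*Cf) := by
          refine mul_le_mul (hflip t ht s hs) hsum (abs_nonneg _) ?_
          have h5 : (0:ℝ) ≤ 4*B*(K:ℝ) := by positivity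
          exact mul_nonneg h5 (abs_nonneg _)
      _ = 8*Cf*B*(K:ℝ)*|t-s| := by ring
  obtain ⟨G, hGlip, hGeq⟩ := hglipOn.extend_real
  have hsub12 : Icc (0:ℝ) 1 ⊆ Icc (-1:ℝ) 2 := Icc_subset_Icc (by norm_num) (by norm_num)
  have hder : ∀ t ∈ Icc (0:ℝ) 1, deriv G t = deriv g t := by
    intro t ht
    have hnb : Icc (-1:ℝ) 2 ∈ 𝓝 t := Icc_mem_nhds (by linarith [ht.1]) (by linarith [ht.2])
    exact Filter.EventuallyEq.deriv_eq (eventually_of_mem hnb (fun s hs => (hGeq hs).symm))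
  have hGcl : G 0 = G 1 := by
    rw [← hGeq (hsub12 (by norm_num : (0:ℝ) ∈ Icc (0:ℝ) 1)),
      ← hGeq (hsub12 (by norm_num : (1:ℝ) ∈ Icc (0:ℝ) 1))]
    show (tfRho ρ₀ β (γ 0))^2 = (tfRho ρ₀ β (γ 1))^2
    rw [hclosed]
  -- variation bound
  have hvar : 2*(M^2 - m^2) ≤ ∫ t in (0:ℝ)..1, |deriv G t| := by
    have habs : |G t₁ - G t₀| = M^2 - m^2 := by
      rw [← hGeq (hsub12 ht₁), ← hGeq (hsub12 ht₀)]
      show |(f t₁)^2 - (f t₀)^2| = M^2 - m^2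
      rw [abs_of_nonneg (by nlinarith)]
    rcases le_total t₀ t₁ with hle | hle
    · have h := two_osc_le hGlip ht₀ ht₁ hle hGcl
      rwa [habs] at h
    · have h := two_osc_le hGlip ht₁ ht₀ hle hGcl
      rw [abs_sub_comm, habs] at h
      exact h
  -- a.e. bound on |deriv G|
  have hIabsG : IntervalIntegrable (fun t => |deriv G t|) volume 0 1 :=
    (lip_deriv_II hGlip 0 1).abs
  have hbnd : (fun t => |deriv G t|)
      ≤ᶠ[ae (volume.restrict (Icc (0:ℝ) 1))] fun t => 4*Real.sqrt ρ₀*(f t * D t) := by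
    filter_upwards [ae_restrict_of_ae hγ.ae_differentiableAt_real,
      ae_restrict_mem measurableSet_Icc] with t hdiff ht
    have hyd : HasDerivAt y (deriv y t) t := (hdiff.fst).hasDerivAt
    have hzd : HasDerivAt z (deriv z t) t := (hdiff.snd).hasDerivAt
    have hfd : HasDerivAt f (-(2*y t*deriv y t) - β^2*(2*z t*deriv z t)) t := by
      have h1 : HasDerivAt (fun s => (y s)^2) (2*y t*deriv y t) t := by
        simpa using hyd.fun_pow 2
      have h2 : HasDerivAt (fun s => β^2*(z s)^2) (β^2*(2*z t*deriv z t)) t := by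
        simpa using (hzd.fun_pow 2).const_mul (β^2)
      have h3 := ((hasDerivAt_const t ρ₀).sub h1).sub h2
      have e : (0:ℝ) - 2*y t*deriv y t - β^2*(2*z t*deriv z t)
          = -(2*y t*deriv y t) - β^2*(2*z t*deriv z t) := by ring
      rw [e] at h3
      exact h3
    have hgd : HasDerivAt g (2*f t*(-(2*y t*deriv y t) - β^2*(2*z t*deriv z t))) t := by
      have h4 := hfd.fun_pow 2
      have e : (2:ℕ)*(f t)^(2-1)*(-(2*y t*deriv y t) - β^2*(2*z t*deriv z t))
          = 2*f t*(-(2*y t*deriv y t) - β^2*(2*z t*deriv z t)) := by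
        push_cast; ring
      rw [e] at h4
      exact h4
    have hdg : deriv g t = 2*f t*(-(2*y t*deriv y t) - β^2*(2*z t*deriv z t)) := hgd.deriv
    rw [hder t ht, hdg]
    have hft : 0 ≤ f t := hft0 t ht
    have hcon : (y t)^2 + β^2*(z t)^2 ≤ ρ₀ := by
      have e : f t = ρ₀ - (y t)^2 - β^2*(z t)^2 := rfl
      nlinarith [hft, e ▸ hft]
    have hr0 : 0 ≤ Real.sqrt ρ₀ := Real.sqrt_nonneg _
    have hr2 : (Real.sqrt ρ₀)^2 = ρ₀ := Real.sq_sqrt hρ₀.le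
    have hD2 : (D t)^2 = (deriv y t)^2 + (deriv z t)^2 := Real.sq_sqrt (by positivity)
    have hA : |(-(2*y t*deriv y t) - β^2*(2*z t*deriv z t))|
        ≤ 2*Real.sqrt ρ₀ * D t := by
      rw [← Real.sqrt_sq_eq_abs]
      have cs : (y t*deriv y t + β^2*(z t)*deriv z t)^2
          ≤ ((y t)^2 + (β^2)^2*(z t)^2)*((deriv y t)^2+(deriv z t)^2) := by
        nlinarith [sq_nonneg (y t*deriv z t - β^2*z t*deriv y t)]
      have hb4 : (β^2)^2*(z t)^2 ≤ β^2*(z t)^2 := by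
        nlinarith [mul_nonneg (sq_nonneg β) (sq_nonneg (z t)), sq_nonneg (z t)]
      have hsum0 : (0:ℝ) ≤ (deriv y t)^2+(deriv z t)^2 := by positivity
      have key : (-(2*y t*deriv y t) - β^2*(2*z t*deriv z t))^2
          ≤ (2*Real.sqrt ρ₀ * D t)^2 := by
        nlinarith [cs, mul_le_mul_of_nonneg_right
          (show (y t)^2 + (β^2)^2*(z t)^2 ≤ ρ₀ by linarith) hsum0, hr2, hD2]
      calc Real.sqrt ((-(2*y t*deriv y t) - β^2*(2*z t*deriv z t))^2)
          ≤ Real.sqrt ((2*Real.sqrt ρ₀*D t)^2) := Real.sqrt_le_sqrt key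
        _ = 2*Real.sqrt ρ₀*D t := Real.sqrt_sq (by positivity)
    calc |2*f t*(-(2*y t*deriv y t) - β^2*(2*z t*deriv z t))|
        = 2*f t*|(-(2*y t*deriv y t) - β^2*(2*z t*deriv z t))| := by
          rw [abs_mul, abs_of_nonneg (by linarith : (0:ℝ) ≤ 2*f t)]
      _ ≤ 2*f t*(2*Real.sqrt ρ₀*D t) :=
          mul_le_mul_of_nonneg_left hA (by linarith)
      _ = 4*Real.sqrt ρ₀*(f t * D t) := by ring
  have hmono2 : (∫ t in (0:ℝ)..1, |deriv G t|)
      ≤ ∫ t in (0:ℝ)..1, 4*Real.sqrt ρ₀*(f t * D t) :=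
    integral_mono_ae_restrict (by norm_num) hIabsG (hIL.const_mul _) hbnd
  have hkey : M^2 - m^2 ≤ 2*Real.sqrt ρ₀ * L := by
    have e : (∫ t in (0:ℝ)..1, 4*Real.sqrt ρ₀*(f t * D t)) = 4*Real.sqrt ρ₀ * L := by
      rw [hL]; exact intervalIntegral.integral_const_mul _ _
    rw [e] at hmono2
    linarith [hvar]
  -- conclusion
  have hstep : M - m ≤ Real.sqrt (2*Real.sqrt ρ₀) * Real.sqrt L := by
    have h1 : (M - m)^2 ≤ 2*Real.sqrt ρ₀ * L := by
      nlinarith [mul_nonneg hm0 (sub_nonneg.2 hmM)]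
    calc M - m = Real.sqrt ((M-m)^2) := (Real.sqrt_sq (by linarith)).symm
      _ ≤ Real.sqrt (2*Real.sqrt ρ₀ * L) := Real.sqrt_le_sqrt h1
      _ = Real.sqrt (2*Real.sqrt ρ₀) * Real.sqrt L := Real.sqrt_mul (by positivity) L
  have h32 : L ^ ((3:ℝ)/2) = Real.sqrt L * L := by
    rw [show ((3:ℝ)/2) = 1/2 + 1 by norm_num, Real.rpow_add' hL0 (by norm_num),
      Real.rpow_one, ← Real.sqrt_eq_rpow]
  calc |∫ t in (0:ℝ)..1, (f t)^2 * deriv z t| ≤ (M - m) * L := hLHS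
    _ ≤ (Real.sqrt (2*Real.sqrt ρ₀) * Real.sqrt L) * L :=
        mul_le_mul_of_nonneg_right hstep hL0
    _ = Real.sqrt (2*Real.sqrt ρ₀) * L ^ ((3:ℝ)/2) := by rw [h32]; ring
end

section
/- Let ρ(y,z) = ρ₀ − y² − β²z² and Ω > 0 with Ωρ₀ ≤ 1. Then for every Lipschitz curve γ(t) = (y(t), z(t)) in the closure of D = {ρ > 0} that is not constant, E[γ] = ∫ ρ(γ)|γ'| dt − Ω∫ ρ(γ)² z' dt ≥ 0, with E[γ] > 0 whenever γ spends positive time in D. That is, below the velocity Ωρ₀ = 1 no vortex line has negative energy. -/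
open MeasureTheory Set

/-- A Lipschitz function whose derivative vanishes a.e. on `Ioo a b` does not decrease
from `a` to `b`. -/
lemma lip_le_of_deriv_ae_zero {f : ℝ → ℝ} {K : NNReal} (hf : LipschitzWith K f)
    {a b : ℝ} (hab : a ≤ b) (hd : ∀ᵐ t, t ∈ Ioo a b → deriv f t = 0) :
    f a ≤ f b := by
  set h : ℝ → ℝ := fun t => f t + K * t with hh
  have hmono : Monotone h := by
    intro s t hst
    have := hf.dist_le_mul s t
    rw [Real.dist_eq, Real.dist_eq] at this
    have h1 : |f s - f t| ≤ K * (t - s) := by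
      rcases le_or_gt s t with h' | h'
      · calc |f s - f t| ≤ K * |s - t| := this
          _ = K * (t - s) := by rw [abs_sub_comm, abs_of_nonneg (by linarith)]
      · linarith
    have := abs_le.mp h1
    simp only [hh]; nlinarith [this.1, this.2]
  set H : StieltjesFunction ℝ :=
    { toFun := h
      mono' := hmono
      right_continuous' := fun x =>
        ((hf.continuous.add (continuous_const.mul continuous_id)).continuousAt).continuousWithinAt }
    with hH
  have hHf : (H : ℝ → ℝ) = h := rfl
  have hderiv := H.ae_hasDerivAt
  have hfin := Measure.rnDeriv_lt_top H.measure volume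
  have key : ∀ᵐ t, t ∈ Ioo a b → H.measure.rnDeriv volume t = ENNReal.ofReal K := by
    filter_upwards [hderiv, hfin, hd] with t ht1 ht2 ht3 htmem
    have hK : HasDerivAt (fun u : ℝ => (K:ℝ) * u) K t := by
      simpa using (hasDerivAt_id t).const_mul (K:ℝ)
    have hft : HasDerivAt f ((H.measure.rnDeriv volume t).toReal - K) t := by
      have : HasDerivAt (fun u => h u - K * u) ((H.measure.rnDeriv volume t).toReal - K) t :=
        ht1.sub hK
      simpa [hh] using this
    have : (H.measure.rnDeriv volume t).toReal - K = deriv f t := hft.deriv.symm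
    rw [ht3 htmem] at this
    have htoReal : (H.measure.rnDeriv volume t).toReal = K := by linarith
    rw [← htoReal, ENNReal.ofReal_toReal ht2.ne]
  have hle : ENNReal.ofReal ((K:ℝ) * (b - a)) ≤ ENNReal.ofReal (h b - h a) := by
    have h1 : (volume.withDensity (H.measure.rnDeriv volume)) (Ioc a b) ≤ H.measure (Ioc a b) :=
      Measure.withDensity_rnDeriv_le H.measure volume (Ioc a b)
    rw [withDensity_apply _ measurableSet_Ioc, H.measure_Ioc] at h1
    have h2 : ∫⁻ t in Ioc a b, H.measure.rnDeriv volume t =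
        ∫⁻ t in Ioo a b, H.measure.rnDeriv volume t := by
      rw [Measure.restrict_congr_set Ioo_ae_eq_Ioc]
    have h3 : ∫⁻ t in Ioo a b, H.measure.rnDeriv volume t =
        ∫⁻ _ in Ioo a b, ENNReal.ofReal K := by
      refine lintegral_congr_ae ((ae_restrict_iff' measurableSet_Ioo).mpr ?_)
      filter_upwards [key] with t ht htmem using ht htmem
    rw [h2, h3] at h1
    rw [lintegral_const, Measure.restrict_apply MeasurableSet.univ, univ_inter,
      Real.volume_Ioo, ← ENNReal.ofReal_mul NNReal.zero_le_coe] at h1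
    exact h1
  have hfin2 : (0:ℝ) ≤ h b - h a := sub_nonneg.mpr (hmono hab)
  have := (ENNReal.ofReal_le_ofReal_iff hfin2).mp hle
  simp only [hh] at this
  nlinarith

/-- A Lipschitz function whose derivative vanishes a.e. on `Ioo a b` is constant on `[a,b]`. -/
lemma lip_eq_of_deriv_ae_zero {f : ℝ → ℝ} {K : NNReal} (hf : LipschitzWith K f)
    {a b : ℝ} (hab : a ≤ b) (hd : ∀ᵐ t, t ∈ Ioo a b → deriv f t = 0) :
    f b = f a := by
  refine le_antisymm ?_ (lip_le_of_deriv_ae_zero hf hab hd)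
  have hneg : LipschitzWith K (fun t => -f t) := hf.neg
  have hdneg : ∀ᵐ t, t ∈ Ioo a b → deriv (fun u => -f u) t = 0 := by
    filter_upwards [hd] with t ht htmem
    rw [deriv.fun_neg, ht htmem, neg_zero]
  have := lip_le_of_deriv_ae_zero hneg hab hdneg
  simpa using this

lemma deriv_abs_le_s17 {f : ℝ → ℝ} {K : NNReal} (h : LipschitzWith K f) (t : ℝ) : |deriv f t| ≤ K := by
  have h1 : ‖fderiv ℝ f t‖ ≤ K := norm_fderiv_le_of_lipschitz ℝ h
  have h2 : deriv f t = fderiv ℝ f t 1 := by rw [← fderiv_apply_one_eq_deriv]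
  calc |deriv f t| = ‖fderiv ℝ f t 1‖ := by rw [h2]; rfl
    _ ≤ ‖fderiv ℝ f t‖ * ‖(1:ℝ)‖ := (fderiv ℝ f t).le_opNorm 1
    _ ≤ K := by simpa using h1

lemma sq_diff_bound {u v M L : ℝ} (hu : |u| ≤ M) (hv : |v| ≤ M) (huv : |u - v| ≤ L) :
    |u^2 - v^2| ≤ 2*M*L := by
  rw [abs_le] at hu hv huv ⊢
  constructor <;> nlinarith [hu.1, hu.2, hv.1, hv.2, huv.1, huv.2]

lemma origin_of_eq {ρ₀ β a b : ℝ} (hβ : 0 < β) (h : ρ₀ - a^2 - β^2*b^2 = ρ₀) :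
    a = 0 ∧ b = 0 := by
  have hb : b = 0 := by
    by_contra hb
    have h2 : 0 < b^2 := by positivity
    nlinarith [mul_pos (pow_pos hβ 2) h2, sq_nonneg a]
  have ha : a^2 = 0 := by rw [hb] at h; nlinarith
  exact ⟨pow_eq_zero_iff two_ne_zero |>.mp ha, hb⟩

lemma pt_nonneg {g s dz Ω : ℝ} (hg : 0 ≤ g) (hΩg : Ω * g ≤ 1) (hΩ : 0 < Ω) (hzs : |dz| ≤ s) :
    0 ≤ g * s - Ω * g^2 * dz := by
  have h1 : dz ≤ s := (le_abs_self dz).trans hzs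
  have h2 : -dz ≤ s := (neg_le_abs dz).trans hzs
  have hs0 : 0 ≤ s := (abs_nonneg dz).trans hzs
  rcases le_or_gt dz 0 with h | h
  · nlinarith [mul_nonneg hg hs0, mul_nonneg (mul_nonneg hΩ.le (sq_nonneg g)) (neg_nonneg.mpr h)]
  · nlinarith [mul_le_mul_of_nonneg_left h1 hg, mul_nonneg hg h.le,
      mul_le_mul_of_nonneg_right hΩg (mul_nonneg hg h.le)]

lemma pt_zero {g dy dz Ω : ℝ} (hg : 0 < g) (hΩg : Ω * g ≤ 1) (hΩ : 0 < Ω)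
    (h0 : g * Real.sqrt (dy^2 + dz^2) - Ω * g^2 * dz = 0) :
    dy = 0 ∧ (dz = 0 ∨ Ω * g = 1) := by
  set s := Real.sqrt (dy^2 + dz^2) with hs
  have hsum : (0:ℝ) ≤ dy^2 + dz^2 := by positivity
  have hs2 : s^2 = dy^2 + dz^2 := Real.sq_sqrt hsum
  have hs0 : 0 ≤ s := Real.sqrt_nonneg _
  have hzs : |dz| ≤ s := by
    rw [hs, ← Real.sqrt_sq_eq_abs]
    exact Real.sqrt_le_sqrt (by nlinarith)
  have hsz : s = Ω * g * dz := by
    have : g * s = Ω * g^2 * dz := by linarith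
    field_simp at this ⊢
    nlinarith
  have hdz0 : 0 ≤ dz := by
    by_contra hcon
    push_neg at hcon
    nlinarith [mul_pos (mul_pos hΩ hg) (neg_pos.mpr hcon)]
  have hsdz : s = dz := by
    have h1 : dz ≤ |dz| := le_abs_self dz
    have h2 : s ≤ dz := by nlinarith [mul_le_mul_of_nonneg_right hΩg hdz0]
    have h3 : dz ≤ s := (le_abs_self dz).trans hzs
    linarith
  have hdy : dy = 0 := by
    have hsq : dy^2 = 0 := by nlinarith
    exact pow_eq_zero_iff two_ne_zero |>.mp hsq
  refine ⟨hdy, ?_⟩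
  rcases eq_or_lt_of_le hdz0 with h | h
  · exact Or.inl h.symm
  · right; nlinarith

set_option maxHeartbeats 1600000 in
lemma stmt_17_aux (ρ₀ β Ω : ℝ) (hρ₀ : 0 < ρ₀) (hβ : 0 < β) (hΩ0 : 0 < Ω)
    (hΩ : Ω * ρ₀ ≤ 1)
    (y z : ℝ → ℝ) (Ky Kz : NNReal)
    (hy : LipschitzWith Ky y) (hz : LipschitzWith Kz z)
    (hin : ∀ t ∈ Icc (0:ℝ) 1, 0 ≤ ρ₀ - (y t)^2 - β^2*(z t)^2)
    (hnc : ∃ s ∈ Icc (0:ℝ) 1, ∃ t ∈ Icc (0:ℝ) 1, (y s, z s) ≠ (y t, z t)) :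
    0 ≤ (∫ t in (0:ℝ)..1,
        ((ρ₀ - (y t)^2 - β^2*(z t)^2) * Real.sqrt ((deriv y t)^2 + (deriv z t)^2)
          - Ω * (ρ₀ - (y t)^2 - β^2*(z t)^2)^2 * deriv z t))
    ∧ (0 < volume {t ∈ Icc (0:ℝ) 1 | 0 < ρ₀ - (y t)^2 - β^2*(z t)^2} →
      0 < ∫ t in (0:ℝ)..1,
        ((ρ₀ - (y t)^2 - β^2*(z t)^2) * Real.sqrt ((deriv y t)^2 + (deriv z t)^2)
          - Ω * (ρ₀ - (y t)^2 - β^2*(z t)^2)^2 * deriv z t)) := by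
  set g : ℝ → ℝ := fun t => ρ₀ - (y t)^2 - β^2*(z t)^2 with hgdef
  set F : ℝ → ℝ := fun t =>
    g t * Real.sqrt ((deriv y t)^2 + (deriv z t)^2) - Ω * (g t)^2 * deriv z t with hFdef
  -- basic facts
  have hgρ : ∀ t, g t ≤ ρ₀ := by
    intro t; simp only [hgdef]; nlinarith [sq_nonneg (y t), sq_nonneg (z t), sq_nonneg β,
      mul_nonneg (sq_nonneg β) (sq_nonneg (z t))]
  have hΩg : ∀ t, Ω * g t ≤ 1 := by
    intro t
    calc Ω * g t ≤ Ω * ρ₀ := mul_le_mul_of_nonneg_left (hgρ t) hΩ0.le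
      _ ≤ 1 := hΩ
  have hzs : ∀ t, |deriv z t| ≤ Real.sqrt ((deriv y t)^2 + (deriv z t)^2) := by
    intro t
    rw [← Real.sqrt_sq_eq_abs]
    exact Real.sqrt_le_sqrt (by nlinarith [sq_nonneg (deriv y t)])
  have hFnn : ∀ u ∈ Icc (0:ℝ) 1, 0 ≤ F u := fun u hu =>
    pt_nonneg (hin u hu) (hΩg u) hΩ0 (hzs u)
  have h1 : 0 ≤ ∫ t in (0:ℝ)..1, F t := intervalIntegral.integral_nonneg zero_le_one hFnn
  refine ⟨h1, fun hA => lt_of_le_of_ne h1 fun h0 => ?_⟩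
  -- integrability of F on (0,1]
  have hgcont : Continuous g := by
    simp only [hgdef]
    exact (continuous_const.sub (hy.continuous.pow 2)).sub
      (continuous_const.mul (hz.continuous.pow 2))
  have hFmeas : Measurable F := by
    simp only [hFdef]
    exact ((hgcont.measurable.mul (((measurable_deriv y).pow_const 2).add
        ((measurable_deriv z).pow_const 2)).sqrt)).sub
      (((measurable_const.mul (hgcont.measurable.pow_const 2)).mul (measurable_deriv z)))
  have hFbdd : ∀ t ∈ Icc (0:ℝ) 1, ‖F t‖ ≤ ρ₀ * (Ky + Kz) + Ω * ρ₀^2 * Kz := by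
    intro t ht
    have hg0 : 0 ≤ g t := hin t ht
    have hdy := deriv_abs_le_s17 hy t
    have hdz := deriv_abs_le_s17 hz t
    have hs0 : 0 ≤ Real.sqrt ((deriv y t)^2 + (deriv z t)^2) := Real.sqrt_nonneg _
    have hsle : Real.sqrt ((deriv y t)^2 + (deriv z t)^2) ≤ (Ky:ℝ) + Kz := by
      rw [show ((Ky:ℝ) + Kz) = Real.sqrt (((Ky:ℝ) + Kz)^2) from
        (Real.sqrt_sq (by positivity)).symm]
      refine Real.sqrt_le_sqrt ?_
      have h1 : (deriv y t)^2 ≤ (Ky:ℝ)^2 := by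
        nlinarith [abs_nonneg (deriv y t), sq_abs (deriv y t)]
      have h2 : (deriv z t)^2 ≤ (Kz:ℝ)^2 := by
        nlinarith [abs_nonneg (deriv z t), sq_abs (deriv z t)]
      nlinarith [mul_nonneg (Ky.coe_nonneg) (Kz.coe_nonneg)]
    have hC0 : (0:ℝ) ≤ ρ₀ * (Ky + Kz) + Ω * ρ₀^2 * Kz := by positivity
    rw [Real.norm_eq_abs, abs_le]
    constructor
    · have := hFnn t ht; linarith
    · have h3 : F t ≤ g t * Real.sqrt ((deriv y t)^2 + (deriv z t)^2)
          + Ω * (g t)^2 * |deriv z t| := by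
        simp only [hFdef]
        nlinarith [mul_le_mul_of_nonneg_left (neg_le_abs (deriv z t))
          (mul_nonneg hΩ0.le (sq_nonneg (g t)))]
      have h4 : g t * Real.sqrt ((deriv y t)^2 + (deriv z t)^2) ≤ ρ₀ * ((Ky:ℝ) + Kz) :=
        mul_le_mul (hgρ t) hsle hs0 hρ₀.le
      have h5 : Ω * (g t)^2 * |deriv z t| ≤ Ω * ρ₀^2 * Kz := by
        have hg2 : (g t)^2 ≤ ρ₀^2 := by nlinarith [hgρ t]
        nlinarith [mul_le_mul_of_nonneg_left
          (mul_le_mul hg2 hdz (abs_nonneg _) (sq_nonneg ρ₀)) hΩ0.le]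
      linarith
  have hIntOn : IntegrableOn F (Ioc 0 1) volume := by
    refine Measure.integrableOn_of_bounded (by simp [Real.volume_Ioc]) hFmeas.aestronglyMeasurable
      ((ae_restrict_iff' measurableSet_Ioc).mpr (ae_of_all _ fun t ht =>
        hFbdd t ⟨ht.1.le, ht.2⟩))
  -- from the vanishing integral, F = 0 a.e. on (0,1]
  have h0' : ∫ t in Ioc (0:ℝ) 1, F t = 0 := by
    rw [← intervalIntegral.integral_of_le zero_le_one]; exact h0.symm
  have hF0 : ∀ᵐ t, t ∈ Ioc (0:ℝ) 1 → F t = 0 := by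
    rw [← ae_restrict_iff' measurableSet_Ioc]
    refine (integral_eq_zero_iff_of_nonneg_ae ?_ hIntOn).mp h0'
    exact (ae_restrict_iff' measurableSet_Ioc).mpr (ae_of_all _ fun t ht =>
      hFnn t ⟨ht.1.le, ht.2⟩)
  -- pointwise consequences a.e. on (0,1)
  have hyz : ∀ᵐ t, t ∈ Ioo (0:ℝ) 1 → 0 < g t →
      deriv y t = 0 ∧ (deriv z t = 0 ∨ (y t = 0 ∧ z t = 0)) := by
    filter_upwards [hF0] with t hFt htmem hgt
    have h2 := pt_zero hgt (hΩg t) hΩ0 (hFt ⟨htmem.1, htmem.2.le⟩)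
    refine ⟨h2.1, ?_⟩
    rcases h2.2 with h | h
    · exact Or.inl h
    · right
      have hgtρ : g t = ρ₀ := by nlinarith [hgρ t]
      simp only [hgdef] at hgtρ
      exact origin_of_eq hβ hgtρ
  -- derivative of g vanishes a.e. on (0,1)
  have hgd : ∀ᵐ t, t ∈ Ioo (0:ℝ) 1 → deriv g t = 0 := by
    filter_upwards [hyz, hy.ae_differentiableAt_real, hz.ae_differentiableAt_real]
      with t hyzt hdyt hdzt htmem
    rcases eq_or_lt_of_le (hin t ⟨htmem.1.le, htmem.2.le⟩) with hgt | hgt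
    · -- local minimum
      have hmin : IsLocalMin g t := by
        filter_upwards [isOpen_Ioo.mem_nhds htmem] with u hu
        simp only [hgdef]
        have := hin u ⟨hu.1.le, hu.2.le⟩
        linarith [hgt]
      exact hmin.deriv_eq_zero
    · obtain ⟨hdy0, hrest⟩ := hyzt htmem hgt
      have hgderiv : HasDerivAt g
          (-(2 * y t ^ 1 * deriv y t) - β^2 * (2 * z t ^ 1 * deriv z t)) t := by
        have h1 : HasDerivAt (fun u => (y u)^2) (2 * y t ^ 1 * deriv y t) t := by
          simpa using (hdyt.hasDerivAt.fun_pow 2)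
        have h2 : HasDerivAt (fun u => (z u)^2) (2 * z t ^ 1 * deriv z t) t := by
          simpa using (hdzt.hasDerivAt.fun_pow 2)
        simpa [hgdef, sub_sub] using ((h1.const_sub ρ₀).fun_sub (h2.const_mul (β^2)))
      rw [hgderiv.deriv]
      rcases hrest with h | h
      · rw [hdy0, h]; ring
      · rw [hdy0, h.1, h.2]; ring
  -- extend g to a globally Lipschitz function via clamping
  set Q : ℝ → ℝ := fun t => min (max t 0) 1 with hQdef
  have hQlip : LipschitzWith 1 Q := by
    refine LipschitzWith.of_dist_le_mul fun s t => ?_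
    rw [Real.dist_eq, Real.dist_eq]
    simp only [hQdef, NNReal.coe_one, one_mul]
    have h1 : |min (max s 0) 1 - min (max t 0) 1| ≤ |max s 0 - max t 0| := by
      have := abs_min_sub_min_le_max (max s 0) 1 (max t 0) 1
      simpa using this
    have h2 : |max s 0 - max t 0| ≤ |s - t| := by
      have := abs_max_sub_max_le_max s 0 t 0
      simpa using this
    linarith
  have hQmem : ∀ t, Q t ∈ Icc (0:ℝ) 1 := fun t =>
    ⟨le_min (le_max_right t 0) zero_le_one, min_le_right _ 1⟩
  have hQid : ∀ t ∈ Icc (0:ℝ) 1, Q t = t := by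
    intro t ht
    simp only [hQdef, max_eq_left ht.1, min_eq_left ht.2]
  -- bounds for y ∘ Q and z ∘ Q
  have hYb : ∀ t, |y (Q t)| ≤ |y 0| + Ky := by
    intro t
    have := hy.dist_le_mul (Q t) 0
    rw [Real.dist_eq, Real.dist_eq, sub_zero] at this
    have hQb : |Q t| ≤ 1 := by
      rw [abs_of_nonneg (hQmem t).1]; exact (hQmem t).2
    have : |y (Q t) - y 0| ≤ Ky := le_trans this (by nlinarith [Ky.coe_nonneg])
    have h2 := abs_sub_abs_le_abs_sub (y (Q t)) (y 0)
    linarith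
  have hZb : ∀ t, |z (Q t)| ≤ |z 0| + Kz := by
    intro t
    have := hz.dist_le_mul (Q t) 0
    rw [Real.dist_eq, Real.dist_eq, sub_zero] at this
    have hQb : |Q t| ≤ 1 := by
      rw [abs_of_nonneg (hQmem t).1]; exact (hQmem t).2
    have : |z (Q t) - z 0| ≤ Kz := le_trans this (by nlinarith [Kz.coe_nonneg])
    have h2 := abs_sub_abs_le_abs_sub (z (Q t)) (z 0)
    linarith
  set CG : ℝ := 2*(|y 0| + Ky)*Ky + β^2 * (2*(|z 0| + Kz)*Kz) with hCGdef
  have hCG0 : 0 ≤ CG := by positivity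
  set G : ℝ → ℝ := fun t => ρ₀ - (y (Q t))^2 - β^2*(z (Q t))^2 with hGdef
  have hGlip : LipschitzWith CG.toNNReal G := by
    refine LipschitzWith.of_dist_le_mul fun s t => ?_
    rw [Real.dist_eq, Real.dist_eq, Real.coe_toNNReal _ hCG0]
    have hys : |y (Q s) - y (Q t)| ≤ Ky * |s - t| := by
      have := hy.dist_le_mul (Q s) (Q t)
      rw [Real.dist_eq, Real.dist_eq] at this
      have hq := hQlip.dist_le_mul s t
      rw [Real.dist_eq, Real.dist_eq, NNReal.coe_one, one_mul] at hq
      nlinarith [Ky.coe_nonneg]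
    have hzs' : |z (Q s) - z (Q t)| ≤ Kz * |s - t| := by
      have := hz.dist_le_mul (Q s) (Q t)
      rw [Real.dist_eq, Real.dist_eq] at this
      have hq := hQlip.dist_le_mul s t
      rw [Real.dist_eq, Real.dist_eq, NNReal.coe_one, one_mul] at hq
      nlinarith [Kz.coe_nonneg]
    have hb1 := sq_diff_bound (hYb s) (hYb t) hys
    have hb2 := sq_diff_bound (hZb s) (hZb t) hzs'
    have e1 := abs_le.mp hb1
    have e2 := abs_le.mp hb2
    have e3 := mul_le_mul_of_nonneg_left e2.2 (sq_nonneg β)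
    have e4 := mul_le_mul_of_nonneg_left e2.1 (sq_nonneg β)
    rw [abs_le]
    constructor <;> simp only [hGdef, hCGdef] <;> nlinarith [e1.1, e1.2, e3, e4]
  have hGg : ∀ t ∈ Icc (0:ℝ) 1, G t = g t := by
    intro t ht
    simp only [hGdef, hgdef, hQid t ht]
  -- g is constant on [0,1]
  have hgconst : ∀ u ∈ Icc (0:ℝ) 1, g u = g 0 := by
    intro u hu
    have hGd : ∀ᵐ t, t ∈ Ioo (0:ℝ) u → deriv G t = 0 := by
      filter_upwards [hgd] with t ht htmem
      have htmem' : t ∈ Ioo (0:ℝ) 1 := ⟨htmem.1, lt_of_lt_of_le htmem.2 hu.2⟩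
      have heq : G =ᶠ[nhds t] g := by
        filter_upwards [isOpen_Ioo.mem_nhds htmem'] with v hv
        exact hGg v ⟨hv.1.le, hv.2.le⟩
      rw [heq.deriv_eq]
      exact ht htmem'
    have := lip_eq_of_deriv_ae_zero hGlip hu.1 hGd
    rwa [hGg u hu, hGg 0 ⟨le_refl 0, zero_le_one⟩] at this
  -- the set where g > 0 is nonempty, hence g ≡ g 0 > 0
  obtain ⟨t₀, ht₀⟩ : {t ∈ Icc (0:ℝ) 1 | 0 < g t}.Nonempty := by
    by_contra hemp
    rw [not_nonempty_iff_eq_empty] at hemp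
    have : volume {t ∈ Icc (0:ℝ) 1 | 0 < g t} = 0 := by rw [hemp]; exact measure_empty
    exact absurd this (ne_of_gt hA)
  have hg0pos : 0 < g 0 := by
    rw [← hgconst t₀ ht₀.1]; exact ht₀.2
  by_cases hex : ∃ t ∈ Icc (0:ℝ) 1, y t = 0 ∧ z t = 0
  · -- then g ≡ ρ₀ and the curve is constantly at the origin
    obtain ⟨t₁, ht₁, hy₁, hz₁⟩ := hex
    have hgt₁ : g t₁ = ρ₀ := by simp [hgdef, hy₁, hz₁]
    have hall : ∀ u ∈ Icc (0:ℝ) 1, y u = 0 ∧ z u = 0 := by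
      intro u hu
      have : g u = ρ₀ := by rw [hgconst u hu, ← hgconst t₁ ht₁, hgt₁]
      simp only [hgdef] at this
      exact origin_of_eq hβ this
    obtain ⟨s, hs, t, ht, hne⟩ := hnc
    exact hne (by rw [(hall s hs).1, (hall s hs).2, (hall t ht).1, (hall t ht).2])
  · -- otherwise the derivative of y and z vanish a.e., so the curve is constant
    push_neg at hex
    have hydz : ∀ᵐ t, t ∈ Ioo (0:ℝ) 1 → deriv y t = 0 ∧ deriv z t = 0 := by
      filter_upwards [hyz] with t hyzt htmem
      have hgt : 0 < g t := by
        rw [hgconst t ⟨htmem.1.le, htmem.2.le⟩]; exact hg0pos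
      obtain ⟨hdy0, hrest⟩ := hyzt htmem hgt
      refine ⟨hdy0, ?_⟩
      rcases hrest with h | h
      · exact h
      · exact absurd h.2 (hex t ⟨htmem.1.le, htmem.2.le⟩ h.1)
    have hyconst : ∀ u ∈ Icc (0:ℝ) 1, y u = y 0 := by
      intro u hu
      refine lip_eq_of_deriv_ae_zero hy hu.1 ?_
      filter_upwards [hydz] with t ht htmem
      exact (ht ⟨htmem.1, lt_of_lt_of_le htmem.2 hu.2⟩).1
    have hzconst : ∀ u ∈ Icc (0:ℝ) 1, z u = z 0 := by
      intro u hu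
      refine lip_eq_of_deriv_ae_zero hz hu.1 ?_
      filter_upwards [hydz] with t ht htmem
      exact (ht ⟨htmem.1, lt_of_lt_of_le htmem.2 hu.2⟩).2
    obtain ⟨s, hs, t, ht, hne⟩ := hnc
    exact hne (by rw [hyconst s hs, hzconst s hs, hyconst t ht, hzconst t ht])

/-- below the critical velocity Ωρ₀ ≤ 1 no vortex line has
negative energy: E[γ] ≥ 0 for every nonconstant Lipschitz curve in the
closure of D = {ρ > 0}, with strict inequality if γ spends positive time
in D. -/
theorem stmt_17 (ρ₀ β Ω : ℝ) (hρ₀ : 0 < ρ₀) (hβ : 0 < β) (hΩ0 : 0 < Ω)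
    (hΩ : Ω * ρ₀ ≤ 1)
    (y z : ℝ → ℝ) (Ky Kz : NNReal)
    (hy : LipschitzWith Ky y) (hz : LipschitzWith Kz z)
    (hin : ∀ t ∈ Icc (0:ℝ) 1, 0 ≤ ρ₀ - (y t)^2 - β^2*(z t)^2)
    (hnc : ∃ s ∈ Icc (0:ℝ) 1, ∃ t ∈ Icc (0:ℝ) 1, (y s, z s) ≠ (y t, z t)) :
    0 ≤ (∫ t in (0:ℝ)..1,
        ((ρ₀ - (y t)^2 - β^2*(z t)^2) * Real.sqrt ((deriv y t)^2 + (deriv z t)^2)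
          - Ω * (ρ₀ - (y t)^2 - β^2*(z t)^2)^2 * deriv z t))
    ∧ (0 < volume {t ∈ Icc (0:ℝ) 1 | 0 < ρ₀ - (y t)^2 - β^2*(z t)^2} →
      0 < ∫ t in (0:ℝ)..1,
        ((ρ₀ - (y t)^2 - β^2*(z t)^2) * Real.sqrt ((deriv y t)^2 + (deriv z t)^2)
          - Ω * (ρ₀ - (y t)^2 - β^2*(z t)^2)^2 * deriv z t)) :=
  stmt_17_aux ρ₀ β Ω hρ₀ hβ hΩ0 hΩ y z Ky Kz hy hz hin hnc
end
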